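/- arXiv:math/0608236 — 5 statements merged into one kernel-verified Lean document; each statement's English description precedes it below -/
import Mathlib

section
/- Let μ, ν be probability measures with finite moments of all orders, and define the orthogonal convolution moments by m_{μ⊢ν}(n) = Σ (-1)^{|σ'|-1} k*_μ(σ') m_ν(σ''), summing over interval partitions σ of {1,...,n} with an odd number r of blocks, where σ' consists of the odd-indexed blocks and σ'' of the even-indexed blocks. Then the reciprocal Cauchy transforms, as formal power series, satisfy F_{μ⊢ν}(z) = F_μ(F_ν(z)) - F_ν(z) + z. -/
open MeasureTheory PowerSeries

/-- The power series `A_a(X) = 1 + ∑_{n≥1} a(n) Xⁿ` built from a moment sequence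
`a`; in the variable `X = z⁻¹`, `G(z) = z⁻¹ A_a(z⁻¹)` and `F(z) = z · A_a(z⁻¹)⁻¹`. -/
noncomputable def Aseries (a : ℕ → ℝ) : PowerSeries ℝ :=
  PowerSeries.mk fun n => if n = 0 then 1 else a n

/-- Substitution of a power series `g` of positive order into `A_a`:
`(A_a ∘ g)(X) = ∑_k (coefficients of A_a) g(X)^k`, defined coefficientwise
(legitimate since `coeff n (gᵏ) = 0` for `k > n` when `g` has zero constant
term). -/
noncomputable def substA (a : ℕ → ℝ) (g : PowerSeries ℝ) : PowerSeries ℝ :=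
  PowerSeries.mk fun n => ∑ k ∈ Finset.range (n + 1),
    (if k = 0 then 1 else a k) * PowerSeries.coeff n (g ^ k)

/-- The odd-indexed blocks `σ' = (j₁, j₃, …)` of a tuple of block sizes. -/
def oddBlocks (L : List ℕ) : List ℕ :=
  (L.zipIdx.filter fun p => p.2 % 2 = 0).map Prod.fst

/-- The even-indexed blocks `σ'' = (j₂, j₄, …)` of a tuple of block sizes. -/
def evenBlocks (L : List ℕ) : List ℕ :=
  (L.zipIdx.filter fun p => p.2 % 2 = 1).map Prod.fst

/-- The inverse boolean cumulant `k*_a(j₁,…,j_r) = ∑_{σ ≥ π} (-1)^{|σ|-|π|} m_a(σ)`: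
coarsenings of the interval partition with block sizes `L` correspond to
compositions `c` of `r = L.length`, merging adjacent blocks. -/
noncomputable def kstarL (a : ℕ → ℝ) (L : List ℕ) : ℝ :=
  ∑ c : Composition L.length,
    (-1 : ℝ) ^ (L.length - c.length) *
      ((L.splitWrtComposition c).map fun s => a s.sum).prod

/-- The moments of the orthogonal convolution `μ ⊢ ν` (Proposition 5.1):
`m_{μ⊢ν}(n) = ∑_σ (-1)^{|σ'|-1} k*_μ(σ') m_ν(σ'')`, summing over interval
partitions `σ` of `{1,…,n}` with an odd number of blocks, `σ'` being the
odd-indexed and `σ''` the even-indexed blocks. -/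
noncomputable def momConv (a b : ℕ → ℝ) (n : ℕ) : ℝ :=
  ∑ σ ∈ Finset.univ.filter fun σ : Composition n => Odd σ.length,
    (-1 : ℝ) ^ ((oddBlocks σ.blocks).length - 1) *
      kstarL a (oddBlocks σ.blocks) * ((evenBlocks σ.blocks).map b).prod


lemma enumFrom_shift (L : List ℕ) : ∀ k : ℕ,
    ((L.zipIdx (k+1)).filter fun p => p.2 % 2 = 0).map Prod.fst =
      ((L.zipIdx k).filter fun p => p.2 % 2 = 1).map Prod.fst ∧
    ((L.zipIdx (k+1)).filter fun p => p.2 % 2 = 1).map Prod.fst =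
      ((L.zipIdx k).filter fun p => p.2 % 2 = 0).map Prod.fst := by
  induction L with
  | nil => simp
  | cons x L ih =>
    intro k
    rcases Nat.even_or_odd k with hk | hk
    · have h0 : k % 2 = 0 := Nat.even_iff.mp hk
      have h1 : (k+1) % 2 = 1 := Nat.succ_mod_two_eq_one_iff.mpr h0
      simp [List.zipIdx_cons, List.filter_cons, h0, h1, (ih (k+1)).1, (ih (k+1)).2]
    · have h0 : k % 2 = 1 := Nat.odd_iff.mp hk
      have h1 : (k+1) % 2 = 0 := Nat.succ_mod_two_eq_zero_iff.mpr h0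
      simp [List.zipIdx_cons, List.filter_cons, h0, h1, (ih (k+1)).1, (ih (k+1)).2]

@[simp] lemma oddBlocks_nil : oddBlocks [] = [] := by simp [oddBlocks]
@[simp] lemma evenBlocks_nil : evenBlocks [] = [] := by simp [evenBlocks]

@[simp] lemma oddBlocks_cons (x : ℕ) (L : List ℕ) :
    oddBlocks (x :: L) = x :: evenBlocks L := by
  simp [oddBlocks, evenBlocks, List.zipIdx_cons, List.filter_cons,
    (enumFrom_shift L 0).1]

@[simp] lemma evenBlocks_cons (x : ℕ) (L : List ℕ) :
    evenBlocks (x :: L) = oddBlocks L := by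
  simp [oddBlocks, evenBlocks, List.zipIdx_cons, List.filter_cons,
    (enumFrom_shift L 0).2]

lemma blocks_length (L : List ℕ) :
    (oddBlocks L).length = (L.length + 1) / 2 ∧ (evenBlocks L).length = L.length / 2 := by
  induction L with
  | nil => simp
  | cons x L ih =>
    obtain ⟨h1, h2⟩ := ih
    constructor
    · simp only [oddBlocks_cons, List.length_cons, h2]; omega
    · simp only [evenBlocks_cons, List.length_cons, h1]

lemma oddBlocks_take (t : ℕ) : ∀ L : List ℕ,
    oddBlocks (L.take (2*t+1)) = (oddBlocks L).take (t+1) ∧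
    evenBlocks (L.take (2*t+1)) = (evenBlocks L).take t := by
  induction t with
  | zero =>
    intro L
    match L with
    | [] => simp
    | [x] => simp
    | x :: y :: L => simp
  | succ t ih =>
    intro L
    match L with
    | [] => simp
    | [x] => simp [List.take_of_length_le]
    | x :: y :: L =>
      have h : 2*(t+1)+1 = (2*t+1) + 1 + 1 := by ring
      simp only [h, List.take_succ_cons, oddBlocks_cons, evenBlocks_cons]
      refine ⟨?_, ?_⟩ <;> simp [(ih L).1, (ih L).2]
  
lemma oddBlocks_drop (t : ℕ) : ∀ L : List ℕ,
    oddBlocks (L.drop (2*t)) = (oddBlocks L).drop t ∧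
    evenBlocks (L.drop (2*t)) = (evenBlocks L).drop t := by
  induction t with
  | zero => intro L; simp
  | succ t ih =>
    intro L
    match L with
    | [] => simp
    | [x] =>
      have h1 : List.drop (2*(t+1)) [x] = ([] : List ℕ) :=
        List.drop_eq_nil_of_le (by simp; omega)
      have h2 : List.drop (t+1) [x] = ([] : List ℕ) :=
        List.drop_eq_nil_of_le (by simp)
      simp [h1, h2]
    | x :: y :: L =>
      have h : 2*(t+1) = 2*t + 1 + 1 := by ring
      simp only [h, List.drop_succ_cons, oddBlocks_cons, evenBlocks_cons]
      refine ⟨?_, ?_⟩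
      · simpa using (ih L).1
      · simpa using (ih L).2

noncomputable def cLists (n : ℕ) : Finset (List ℕ) :=
  Finset.univ.image (Composition.blocks : Composition n → List ℕ)

lemma mem_cLists {n : ℕ} {L : List ℕ} :
    L ∈ cLists n ↔ (∀ i ∈ L, 0 < i) ∧ L.sum = n := by
  constructor
  · intro h
    simp only [cLists, Finset.mem_image] at h
    obtain ⟨c, -, rfl⟩ := h
    exact ⟨fun i hi => c.blocks_pos hi, c.blocks_sum⟩
  · rintro ⟨h1, h2⟩
    exact Finset.mem_image.mpr ⟨⟨L, fun hi => h1 _ hi, h2⟩, Finset.mem_univ _, rfl⟩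

lemma sum_comp {M : Type} [AddCommMonoid M] (n : ℕ) (f : List ℕ → M) :
    (∑ c : Composition n, f c.blocks) = ∑ L ∈ cLists n, f L :=
  (Finset.sum_image (fun c _ d _ h => Composition.ext h)).symm

noncomputable def cser (W : List ℕ → ℝ) : PowerSeries ℝ :=
  PowerSeries.mk fun n => ∑ L ∈ cLists n, W L

@[simp] lemma coeff_cser (W : List ℕ → ℝ) (n : ℕ) :
    coeff n (cser W) = ∑ L ∈ cLists n, W L := coeff_mk n _

lemma cser_congr {W W' : List ℕ → ℝ} (h : ∀ L : List ℕ, (∀ i ∈ L, 0 < i) → W L = W' L) :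
    cser W = cser W' := by
  ext n
  simp only [coeff_cser]
  exact Finset.sum_congr rfl fun L hL => h L (mem_cLists.mp hL).1

lemma master (n : ℕ) (W : List ℕ → List ℕ → ℝ) :
    ∑ p ∈ Finset.HasAntidiagonal.antidiagonal n, ∑ L1 ∈ cLists p.1, ∑ L2 ∈ cLists p.2, W L1 L2
      = ∑ L ∈ cLists n, ∑ j ∈ Finset.range (L.length + 1), W (L.take j) (L.drop j) := by
  have hL : (∑ p ∈ Finset.HasAntidiagonal.antidiagonal n, ∑ L1 ∈ cLists p.1, ∑ L2 ∈ cLists p.2, W L1 L2)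
      = ∑ x ∈ (Finset.HasAntidiagonal.antidiagonal n).sigma (fun p => cLists p.1 ×ˢ cLists p.2),
          W x.2.1 x.2.2 := by
    rw [Finset.sum_sigma]
    refine Finset.sum_congr rfl fun p _ => ?_
    exact (Finset.sum_product (cLists p.1) (cLists p.2) (fun q => W q.1 q.2)).symm
  have hR : (∑ L ∈ cLists n, ∑ j ∈ Finset.range (L.length + 1), W (L.take j) (L.drop j))
      = ∑ y ∈ (cLists n).sigma (fun L => Finset.range (L.length + 1)),
          W (y.1.take y.2) (y.1.drop y.2) := by
    rw [Finset.sum_sigma]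
  rw [hL, hR]
  refine Finset.sum_bij' (fun x _ => ⟨x.2.1 ++ x.2.2, x.2.1.length⟩)
    (fun y _ => ⟨((y.1.take y.2).sum, (y.1.drop y.2).sum), (y.1.take y.2, y.1.drop y.2)⟩)
    ?_ ?_ ?_ ?_ ?_
  · rintro ⟨⟨p1, p2⟩, L1, L2⟩ hx
    simp only [Finset.mem_sigma, Finset.HasAntidiagonal.mem_antidiagonal, Finset.mem_product, mem_cLists] at hx ⊢
    obtain ⟨hp, ⟨hpos1, hsum1⟩, ⟨hpos2, hsum2⟩⟩ := hx
    refine ⟨⟨?_, ?_⟩, ?_⟩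
    · intro i hi
      rcases List.mem_append.mp hi with h | h
      · exact hpos1 i h
      · exact hpos2 i h
    · rw [List.sum_append, hsum1, hsum2]; exact hp
    · rw [Finset.mem_range, List.length_append]; omega
  · rintro ⟨L, j⟩ hy
    simp only [Finset.mem_sigma, Finset.mem_range, mem_cLists] at hy
    obtain ⟨⟨hpos, hsum⟩, hj⟩ := hy
    refine Finset.mem_sigma.mpr ⟨Finset.HasAntidiagonal.mem_antidiagonal.mpr ?_,
      Finset.mem_product.mpr ⟨mem_cLists.mpr ⟨?_, rfl⟩, mem_cLists.mpr ⟨?_, rfl⟩⟩⟩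
    · rw [List.sum_take_add_sum_drop]; exact hsum
    · exact fun i hi => hpos i (List.take_subset _ _ hi)
    · exact fun i hi => hpos i (List.drop_subset _ _ hi)
  · rintro ⟨⟨p1, p2⟩, L1, L2⟩ hx
    simp only [Finset.mem_sigma, Finset.HasAntidiagonal.mem_antidiagonal, Finset.mem_product, mem_cLists] at hx
    obtain ⟨hp, ⟨hpos1, hsum1⟩, ⟨hpos2, hsum2⟩⟩ := hx
    refine Sigma.ext ?_ (heq_of_eq ?_)
    · simp [List.take_left, List.drop_left, hsum1, hsum2]
    · simp [List.take_left, List.drop_left]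
  · rintro ⟨L, j⟩ hy
    simp only [Finset.mem_sigma, Finset.mem_range, mem_cLists] at hy
    refine Sigma.ext ?_ (heq_of_eq ?_)
    · simp
    · simp only [List.take_append_drop]
      rw [List.length_take]
      omega
  · rintro ⟨⟨p1, p2⟩, L1, L2⟩ hx
    simp [List.take_left, List.drop_left]

lemma cser_mul (W1 W2 : List ℕ → ℝ) :
    cser W1 * cser W2
      = cser fun L => ∑ j ∈ Finset.range (L.length + 1), W1 (L.take j) * W2 (L.drop j) := by
  ext n
  rw [PowerSeries.coeff_mul]
  simp only [coeff_cser]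
  rw [← master n (fun L1 L2 => W1 L1 * W2 L2)]
  exact Finset.sum_congr rfl fun p _ => by rw [Finset.sum_mul_sum]



lemma sum_pos_list_eq_nil {L : List ℕ} (h : ∀ i ∈ L, 0 < i) (h0 : L.sum = 0) : L = [] := by
  cases L with
  | nil => rfl
  | cons x T =>
    exfalso
    have := h x (by simp)
    simp only [List.sum_cons] at h0
    omega

lemma nil_mem_cLists {n : ℕ} : ([] : List ℕ) ∈ cLists n ↔ n = 0 := by
  rw [mem_cLists]; simp [eq_comm]

lemma cLists_zero : cLists 0 = {([] : List ℕ)} := by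
  ext L
  simp only [Finset.mem_singleton, mem_cLists]
  constructor
  · rintro ⟨h1, h2⟩; exact sum_pos_list_eq_nil h1 h2
  · rintro rfl; simp

lemma list_length_le_sum : ∀ L : List ℕ, (∀ i ∈ L, 0 < i) → L.length ≤ L.sum := by
  intro L
  induction L with
  | nil => simp
  | cons x T ih =>
    intro h
    have hx := h x (by simp)
    have hT := ih (fun i hi => h i (by simp [hi]))
    simp only [List.length_cons, List.sum_cons]
    omega

lemma length_le_of_mem_cLists {n : ℕ} {L : List ℕ} (h : L ∈ cLists n) : L.length ≤ n := by
  obtain ⟨h1, h2⟩ := mem_cLists.mp h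
  rw [← h2]
  exact list_length_le_sum L h1

lemma nonempty_of_mem_cLists {n : ℕ} (hn : n ≠ 0) {L : List ℕ} (h : L ∈ cLists n) :
    L ≠ [] := by
  rintro rfl
  exact hn (nil_mem_cLists.mp h)

lemma singleton_mem_cLists {n : ℕ} (hn : n ≠ 0) : [n] ∈ cLists n := by
  rw [mem_cLists]; simp [Nat.pos_of_ne_zero hn]

lemma eq_singleton_of_mem_cLists {n : ℕ} {L : List ℕ} (h : L ∈ cLists n)
    (hlen : L.length = 1) : L = [n] := by
  obtain ⟨m, rfl⟩ := List.length_eq_one_iff.mp hlen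
  obtain ⟨-, h2⟩ := mem_cLists.mp h
  simp only [List.sum_cons, List.sum_nil, add_zero] at h2
  rw [h2]

lemma one_eq_cser : (1 : PowerSeries ℝ) = cser fun L => if L = [] then 1 else 0 := by
  ext n
  rw [PowerSeries.coeff_one, coeff_cser]
  rcases Nat.eq_zero_or_pos n with rfl | hn
  · rw [cLists_zero]; simp
  · rw [if_neg (by omega)]
    refine (Finset.sum_eq_zero fun L hL => ?_).symm
    rw [if_neg (nonempty_of_mem_cLists (by omega) hL)]

lemma Aseries_eq_cser (b : ℕ → ℝ) :
    Aseries b = cser fun L => if L = [] then 1 else if L.length = 1 then b L.sum else 0 := by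
  ext n
  rw [coeff_cser]
  rcases Nat.eq_zero_or_pos n with rfl | hn
  · rw [cLists_zero]; simp [Aseries]
  · have hn' : n ≠ 0 := by omega
    rw [Finset.sum_eq_single_of_mem ([n]) (singleton_mem_cLists hn')]
    · simp [Aseries, hn']
    · intro L hL hne
      rw [if_neg (nonempty_of_mem_cLists hn' hL)]
      rw [if_neg fun hl => hne (eq_singleton_of_mem_cLists hL hl)]

def bb (b : ℕ → ℝ) (m : ℕ) : ℝ := if m = 1 then 1 else b (m - 1)

lemma X_mul_Aseries_eq_cser (b : ℕ → ℝ) :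
    X * Aseries b = cser fun L => if L.length = 1 then bb b L.sum else 0 := by
  ext n
  rw [coeff_cser]
  cases n with
  | zero =>
    rw [PowerSeries.coeff_zero_X_mul, cLists_zero]
    simp
  | succ n =>
    rw [PowerSeries.coeff_succ_X_mul]
    rw [Finset.sum_eq_single_of_mem ([n+1]) (singleton_mem_cLists (by omega))]
    · have h1 : ([n+1] : List ℕ).length = 1 := rfl
      have hsum : ([n+1] : List ℕ).sum = n + 1 := by simp
      rw [if_pos h1, hsum]
      simp only [Aseries, coeff_mk, bb]
      rcases Nat.eq_zero_or_pos n with rfl | hn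
      · simp
      · rw [if_neg (by omega), if_neg (by omega), Nat.add_sub_cancel]
    · intro L hL hne
      rw [if_neg fun hl => hne (eq_singleton_of_mem_cLists hL hl)]

lemma single_pow (v : ℕ → ℝ) (k : ℕ) :
    (cser fun L => if L.length = 1 then v L.sum else 0) ^ k
      = cser fun L => if L.length = k then (L.map v).prod else 0 := by
  induction k with
  | zero =>
    rw [pow_zero, one_eq_cser]
    refine cser_congr fun L _ => ?_
    cases L <;> simp
  | succ k ih =>
    rw [pow_succ, ih, cser_mul]
    refine cser_congr fun L _ => ?_
    by_cases h : L.length = k + 1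
    · rw [if_pos h]
      rw [Finset.sum_eq_single_of_mem k (Finset.mem_range.mpr (by omega))]
      · have htk : (L.take k).length = k := by rw [List.length_take]; omega
        have hdk : (L.drop k).length = 1 := by rw [List.length_drop]; omega
        obtain ⟨m, hm⟩ := List.length_eq_one_iff.mp hdk
        rw [if_pos htk, if_pos hdk]
        have : L.map v = (L.take k).map v ++ (L.drop k).map v := by
          rw [← List.map_append, List.take_append_drop]
        rw [this, List.prod_append, hm]
        simp
      · intro j hj hne
        rw [Finset.mem_range] at hj
        have htj : (L.take j).length = j := by rw [List.length_take]; omega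
        rw [htj, if_neg hne, zero_mul]
    · rw [if_neg h]
      refine Finset.sum_eq_zero fun j hj => ?_
      rw [Finset.mem_range] at hj
      have htj : (L.take j).length = j := by rw [List.length_take]; omega
      have hdj : (L.drop j).length = L.length - j := by rw [List.length_drop]
      by_cases hjk : j = k
      · subst hjk
        rw [htj, if_pos rfl, hdj, if_neg (show ¬ L.length - j = 1 by omega), mul_zero]
      · rw [htj, if_neg hjk, zero_mul]

lemma cser_sub (W W' : List ℕ → ℝ) :
    cser W - cser W' = cser fun L => W L - W' L := by
  ext n
  simp [Finset.sum_sub_distrib]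

lemma Aseries_sub_one_eq_cser (b : ℕ → ℝ) :
    Aseries b - 1 = cser fun L => if L.length = 1 then b L.sum else 0 := by
  rw [Aseries_eq_cser, one_eq_cser, cser_sub]
  refine cser_congr fun L _ => ?_
  cases L <;> simp

lemma substA_eq_cser (a b : ℕ → ℝ) :
    substA a (X * Aseries b)
      = cser fun L => (if L.length = 0 then 1 else a L.length) * (L.map (bb b)).prod := by
  ext n
  rw [coeff_cser]
  simp only [substA, coeff_mk]
  rw [X_mul_Aseries_eq_cser]
  simp only [single_pow (bb b), coeff_cser, Finset.mul_sum]
  rw [Finset.sum_comm]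
  refine Finset.sum_congr rfl fun L hL => ?_
  have hlen : L.length ≤ n := length_le_of_mem_cLists hL
  have : ∀ k, (if k = 0 then (1:ℝ) else a k) * (if L.length = k then (L.map (bb b)).prod else 0)
      = if L.length = k then (if k = 0 then 1 else a k) * (L.map (bb b)).prod else 0 := by
    intro k
    by_cases h : L.length = k <;> simp [h]
  simp only [this]
  rw [Finset.sum_ite_eq (Finset.range (n+1)) L.length
    (fun k => (if k = 0 then (1:ℝ) else a k) * (L.map (bb b)).prod)]
  rw [if_pos (Finset.mem_range.mpr (by omega))]


lemma sum_range_two_mul (s : ℕ) (F : ℕ → ℝ) :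
    ∑ j ∈ Finset.range (2 * s), F j = ∑ t ∈ Finset.range s, (F (2*t) + F (2*t+1)) := by
  induction s with
  | zero => simp
  | succ s ih =>
    have h : 2 * (s+1) = (2*s) + 1 + 1 := by ring
    rw [h, Finset.sum_range_succ, Finset.sum_range_succ, ih, Finset.sum_range_succ]
    ring

lemma compSum_rec (n : ℕ) (hn : n ≠ 0) (f : List ℕ → ℝ) :
    ∑ L ∈ cLists n, f L
      = ∑ t ∈ Finset.range n, ∑ L ∈ cLists (n - (t+1)), f ((t+1) :: L) := by
  have h := master n (fun L1 L2 => if L1.length = 1 then f (L1 ++ L2) else 0)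
  have hR : (∑ L ∈ cLists n, ∑ j ∈ Finset.range (L.length + 1),
      (if (L.take j).length = 1 then f (L.take j ++ L.drop j) else 0)) = ∑ L ∈ cLists n, f L := by
    refine Finset.sum_congr rfl fun L hL => ?_
    have hne : L ≠ [] := nonempty_of_mem_cLists hn hL
    have hlen : 0 < L.length := List.length_pos_iff.mpr hne
    rw [Finset.sum_eq_single_of_mem 1 (Finset.mem_range.mpr (by omega))]
    · rw [List.take_append_drop]
      rw [if_pos (by rw [List.length_take]; omega)]
    · intro j hj hjne
      rw [Finset.mem_range] at hj
      rw [if_neg (by rw [List.length_take]; omega)]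
  rw [hR] at h
  rw [← h]
  rw [Finset.Nat.sum_antidiagonal_eq_sum_range_succ_mk, Finset.sum_range_succ']
  have h0 : (∑ L1 ∈ cLists ((0:ℕ), n - 0).1, ∑ L2 ∈ cLists ((0:ℕ), n-0).2,
      (if L1.length = 1 then f (L1 ++ L2) else 0)) = 0 := by
    simp only [cLists_zero]
    simp
  rw [h0, add_zero]
  refine Finset.sum_congr rfl fun t ht => ?_
  rw [Finset.sum_eq_single_of_mem ([t+1]) (singleton_mem_cLists (by omega))]
  · refine Finset.sum_congr rfl fun L2 _ => ?_
    rw [if_pos (show ([t+1] : List ℕ).length = 1 by simp)]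
    rfl
  · intro L hL hne
    exact Finset.sum_eq_zero fun L2 _ =>
      if_neg fun hl => hne (eq_singleton_of_mem_cLists hL hl)

lemma hockey (k : ℕ) (n : ℕ) :
    ∑ u ∈ Finset.range n, ((u.choose k : ℕ) : ℝ) = ((n.choose (k+1) : ℕ) : ℝ) := by
  induction n with
  | zero => simp
  | succ n ih =>
    rw [Finset.sum_range_succ, ih, Nat.choose_succ_succ n k]
    push_cast
    ring

lemma sum_nil_indicator (w : ℕ) :
    ∑ L ∈ cLists w, (if L = [] then (1:ℝ) else 0) = if w = 0 then 1 else 0 := by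
  rcases Nat.eq_zero_or_pos w with rfl | hw
  · rw [cLists_zero]; simp
  · rw [if_neg (by omega)]
    exact Finset.sum_eq_zero fun L hL => if_neg (nonempty_of_mem_cLists (by omega) hL)

lemma count_comps : ∀ m : ℕ, m ≠ 0 → ∀ i : ℕ,
    ∑ J ∈ cLists m, (if J.length = i + 1 then (1:ℝ) else 0) = (((m-1).choose i : ℕ) : ℝ) := by
  intro m
  induction m using Nat.strong_induction_on with
  | _ m IH =>
    intro hm i
    rw [compSum_rec m hm]
    cases i with
    | zero =>
      have hinner : ∀ t ∈ Finset.range m,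
          (∑ L ∈ cLists (m - (t+1)), (if ((t+1) :: L).length = 1 then (1:ℝ) else 0))
            = if m - (t+1) = 0 then 1 else 0 := by
        intro t ht
        rw [← sum_nil_indicator (m - (t+1))]
        refine Finset.sum_congr rfl fun L hL => ?_
        by_cases h : L = []
        · subst h; simp
        · have hne' : ¬ (((t+1) :: L).length = 1) := by
            simp only [List.length_cons]
            intro hl
            exact h (List.length_eq_zero_iff.mp (by omega))
          rw [if_neg h, if_neg hne']
      rw [Finset.sum_congr rfl hinner]
      rw [← Finset.sum_filter]
      have : Finset.filter (fun t => m - (t+1) = 0) (Finset.range m) = {m-1} := by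
        ext t
        simp only [Finset.mem_filter, Finset.mem_range, Finset.mem_singleton]
        omega
      rw [this]
      simp
    | succ i =>
      have hinner : ∀ t ∈ Finset.range m,
          (∑ L ∈ cLists (m - (t+1)), (if ((t+1) :: L).length = i + 1 + 1 then (1:ℝ) else 0))
            = if m - (t+1) = 0 then (0:ℝ) else (((m - (t+1) - 1).choose i : ℕ) : ℝ) := by
        intro t ht
        by_cases h : m - (t+1) = 0
        · rw [if_pos h, h, cLists_zero, Finset.sum_singleton, if_neg (by simp)]
        · rw [if_neg h, ← IH (m - (t+1)) (by rw [Finset.mem_range] at ht; omega) h i]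
          refine Finset.sum_congr rfl fun L hL => ?_
          simp [List.length_cons]
      rw [Finset.sum_congr rfl hinner]
      rw [← Finset.sum_range_reflect]
      have hterm : ∀ t ∈ Finset.range m,
          (if m - (m - 1 - t + 1) = 0 then (0:ℝ)
            else (((m - (m - 1 - t + 1) - 1).choose i : ℕ) : ℝ))
          = if t = 0 then (0:ℝ) else (((t-1).choose i : ℕ) : ℝ) := by
        intro t ht
        rw [Finset.mem_range] at ht
        rcases Nat.eq_zero_or_pos t with rfl | hpos
        · rw [if_pos (by omega), if_pos rfl]
        · rw [if_neg (by omega), if_neg (by omega)]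
          congr 2
          omega
      rw [Finset.sum_congr rfl hterm]
      obtain ⟨M, rfl⟩ := Nat.exists_eq_succ_of_ne_zero hm
      rw [Finset.sum_range_succ']
      simp only [Nat.add_sub_cancel, if_neg (Nat.succ_ne_zero _), if_pos rfl, add_zero]
      rw [hockey]
      simp


lemma kstarL_eq_sum (a : ℕ → ℝ) (L : List ℕ) :
    kstarL a L = ∑ K ∈ cLists L.length,
      (-1:ℝ)^(L.length - K.length)
        * ((List.splitWrtCompositionAux L K).map fun s => a s.sum).prod := by
  rw [kstarL, ← sum_comp L.length (fun K => (-1:ℝ)^(L.length - K.length)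
        * ((List.splitWrtCompositionAux L K).map fun s => a s.sum).prod)]
  rfl

lemma kstarL_nil (a : ℕ → ℝ) : kstarL a [] = 1 := by
  rw [kstarL_eq_sum]
  simp only [List.length_nil, cLists_zero, Finset.sum_singleton]
  simp [List.splitWrtCompositionAux]

lemma kstarL_rec (a : ℕ → ℝ) (L : List ℕ) (hL : L ≠ []) :
    kstarL a L = ∑ t ∈ Finset.range L.length,
      (-1:ℝ)^t * a ((L.take (t+1)).sum) * kstarL a (L.drop (t+1)) := by
  have hlen : L.length ≠ 0 := by simp [hL]
  rw [kstarL_eq_sum, compSum_rec L.length hlen]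
  refine Finset.sum_congr rfl fun t ht => ?_
  rw [Finset.mem_range] at ht
  have hdl : (L.drop (t+1)).length = L.length - (t+1) := List.length_drop
  rw [kstarL_eq_sum a (L.drop (t+1)), hdl, Finset.mul_sum]
  refine Finset.sum_congr rfl fun K hK => ?_
  have hKlen : K.length ≤ L.length - (t+1) := length_le_of_mem_cLists hK
  rw [List.splitWrtCompositionAux_cons]
  simp only [List.map_cons, List.prod_cons, List.length_cons]
  have hexp : L.length - (K.length + 1) = t + ((L.length - (t+1)) - K.length) := by omega
  rw [hexp, pow_add]
  ring

lemma M_eq_cser (a b : ℕ → ℝ) :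
    Aseries (momConv a b) = cser fun L =>
      if L = [] then 1 else if Odd L.length then
        (-1:ℝ)^((oddBlocks L).length - 1) * kstarL a (oddBlocks L)
          * ((evenBlocks L).map b).prod
      else 0 := by
  ext n
  rw [coeff_cser]
  rcases Nat.eq_zero_or_pos n with rfl | hn
  · rw [cLists_zero]
    simp [Aseries]
  · have hn' : n ≠ 0 := by omega
    have hco : coeff n (Aseries (momConv a b)) = momConv a b n := by
      simp [Aseries, hn']
    rw [hco, momConv, Finset.sum_filter]
    rw [sum_comp n (fun L => if Odd L.length then
      (-1:ℝ)^((oddBlocks L).length - 1) * kstarL a (oddBlocks L)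
        * ((evenBlocks L).map b).prod else 0)]
    refine Finset.sum_congr rfl fun L hL => ?_
    rw [if_neg (nonempty_of_mem_cLists hn' hL)]


def interleave : List ℕ → List ℕ → List ℕ
  | [], ys => ys
  | x :: xs, ys => x :: interleave ys xs
termination_by xs ys => xs.length + ys.length
decreasing_by simp; omega

@[simp] lemma interleave_nil (ys : List ℕ) : interleave [] ys = ys := by
  rw [interleave]

@[simp] lemma interleave_cons (x : ℕ) (xs ys : List ℕ) :
    interleave (x :: xs) ys = x :: interleave ys xs := by
  rw [interleave]

lemma interleave_odd_even : ∀ L : List ℕ, interleave (oddBlocks L) (evenBlocks L) = L := by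
  intro L
  induction L with
  | nil => simp
  | cons x T ih => simp [ih]

lemma sum_interleave : ∀ J E : List ℕ, (interleave J E).sum = J.sum + E.sum := by
  have H : ∀ n : ℕ, ∀ J E : List ℕ, J.length + E.length ≤ n →
      (interleave J E).sum = J.sum + E.sum := by
    intro n
    induction n with
    | zero =>
      intro J E h
      have : J = [] := List.eq_nil_of_length_eq_zero (by omega)
      subst this
      simp
    | succ n ih =>
      intro J E h
      match J with
      | [] => simp
      | x :: xs =>
        rw [interleave_cons, List.sum_cons, ih E xs (by simp at h ⊢; omega), List.sum_cons]
        ring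
  exact fun J E => H (J.length + E.length) J E le_rfl

lemma mem_interleave : ∀ J E : List ℕ, ∀ i, i ∈ interleave J E ↔ (i ∈ J ∨ i ∈ E) := by
  have H : ∀ n : ℕ, ∀ J E : List ℕ, J.length + E.length ≤ n → ∀ i,
      (i ∈ interleave J E ↔ (i ∈ J ∨ i ∈ E)) := by
    intro n
    induction n with
    | zero =>
      intro J E h i
      have : J = [] := List.eq_nil_of_length_eq_zero (by omega)
      subst this
      simp
    | succ n ih =>
      intro J E h i
      match J with
      | [] => simp
      | x :: xs =>
        rw [interleave_cons, List.mem_cons, ih E xs (by simp at h ⊢; omega) i, List.mem_cons]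
        tauto
  exact fun J E i => H (J.length + E.length) J E le_rfl i

lemma blocks_interleave : ∀ n : ℕ, ∀ J E : List ℕ, J.length + E.length ≤ n →
    E.length ≤ J.length → J.length ≤ E.length + 1 →
    oddBlocks (interleave J E) = J ∧ evenBlocks (interleave J E) = E := by
  intro n
  induction n with
  | zero =>
    intro J E h h1 h2
    have hJ : J = [] := List.eq_nil_of_length_eq_zero (by omega)
    have hE : E = [] := List.eq_nil_of_length_eq_zero (by omega)
    subst hJ; subst hE
    simp
  | succ n ih =>
    intro J E h h1 h2
    match J with
    | [] =>
      have hE : E = [] := by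
        simp only [List.length_nil, Nat.le_zero, List.length_eq_zero_iff] at h1
        exact h1
      subst hE
      simp
    | x :: xs =>
      have hlen : E.length + xs.length ≤ n := by simp at h; omega
      have h1' : xs.length ≤ E.length := by simp at h2; omega
      have h2' : E.length ≤ xs.length + 1 := by simp at h1; omega
      obtain ⟨hodd, heven⟩ := ih E xs hlen h1' h2'
      rw [interleave_cons]
      constructor
      · rw [oddBlocks_cons, heven]
      · rw [evenBlocks_cons, hodd]

lemma interleave_master (n : ℕ) (g : List ℕ → List ℕ → ℝ) :
    ∑ L ∈ cLists n, g (oddBlocks L) (evenBlocks L)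
      = ∑ p ∈ Finset.HasAntidiagonal.antidiagonal n, ∑ J ∈ cLists p.1, ∑ E ∈ cLists p.2,
          (if E.length ≤ J.length ∧ J.length ≤ E.length + 1 then g J E else 0) := by
  have hR : (∑ p ∈ Finset.HasAntidiagonal.antidiagonal n, ∑ J ∈ cLists p.1, ∑ E ∈ cLists p.2,
        (if E.length ≤ J.length ∧ J.length ≤ E.length + 1 then g J E else 0))
      = ∑ x ∈ ((Finset.HasAntidiagonal.antidiagonal n).sigma (fun p => cLists p.1 ×ˢ cLists p.2)).filter
          (fun x => x.2.2.length ≤ x.2.1.length ∧ x.2.1.length ≤ x.2.2.length + 1),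
          g x.2.1 x.2.2 := by
    rw [Finset.sum_filter, Finset.sum_sigma]
    refine Finset.sum_congr rfl fun p _ => ?_
    dsimp only
    exact (Finset.sum_product (cLists p.1) (cLists p.2)
      (fun q => if q.2.length ≤ q.1.length ∧ q.1.length ≤ q.2.length + 1 then g q.1 q.2 else 0)).symm
  rw [hR]
  refine Finset.sum_bij' (fun L _ => ⟨((oddBlocks L).sum, (evenBlocks L).sum),
      (oddBlocks L, evenBlocks L)⟩)
    (fun x _ => interleave x.2.1 x.2.2) ?_ ?_ ?_ ?_ ?_
  · intro L hL
    obtain ⟨hpos, hsum⟩ := mem_cLists.mp hL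
    obtain ⟨hl1, hl2⟩ := blocks_length L
    refine Finset.mem_filter.mpr ⟨Finset.mem_sigma.mpr ⟨Finset.HasAntidiagonal.mem_antidiagonal.mpr ?_,
      Finset.mem_product.mpr ⟨mem_cLists.mpr ⟨?_, rfl⟩, mem_cLists.mpr ⟨?_, rfl⟩⟩⟩, ?_, ?_⟩
    · rw [← sum_interleave, interleave_odd_even, hsum]
    · intro i hi
      exact hpos i (by rw [← interleave_odd_even L, mem_interleave]; exact Or.inl hi)
    · intro i hi
      exact hpos i (by rw [← interleave_odd_even L, mem_interleave]; exact Or.inr hi)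
    · dsimp only
      rw [hl1, hl2]
      omega
    · dsimp only
      rw [hl1, hl2]
      omega
  · rintro ⟨⟨p1, p2⟩, J, E⟩ hx
    rw [Finset.mem_filter, Finset.mem_sigma] at hx
    obtain ⟨⟨hp, hq⟩, hC1, hC2⟩ := hx
    rw [Finset.mem_product] at hq
    obtain ⟨hJ, hE⟩ := hq
    obtain ⟨hJpos, hJsum⟩ := mem_cLists.mp hJ
    obtain ⟨hEpos, hEsum⟩ := mem_cLists.mp hE
    refine mem_cLists.mpr ⟨?_, ?_⟩
    · intro i hi
      rcases (mem_interleave J E i).mp hi with h | h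
      · exact hJpos i h
      · exact hEpos i h
    · rw [sum_interleave, hJsum, hEsum]
      exact Finset.HasAntidiagonal.mem_antidiagonal.mp hp
  · intro L hL
    exact interleave_odd_even L
  · rintro ⟨⟨p1, p2⟩, J, E⟩ hx
    rw [Finset.mem_filter, Finset.mem_sigma] at hx
    obtain ⟨⟨hp, hq⟩, hC1, hC2⟩ := hx
    rw [Finset.mem_product] at hq
    obtain ⟨hJ, hE⟩ := hq
    obtain ⟨hJpos, hJsum⟩ := mem_cLists.mp hJ
    obtain ⟨hEpos, hEsum⟩ := mem_cLists.mp hE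
    dsimp only at hC1 hC2 hJsum hEsum
    obtain ⟨h1, h2⟩ := blocks_interleave (J.length + E.length) J E le_rfl hC1 hC2
    refine Sigma.ext ?_ (heq_of_eq ?_)
    · dsimp only
      rw [h1, h2, hJsum, hEsum]
    · dsimp only
      rw [h1, h2]
  · intro L hL
    rfl

lemma interleave_apply (n : ℕ) (f : List ℕ → List ℕ → ℝ) :
    ∑ L ∈ cLists n, (if Odd L.length then f (oddBlocks L) (evenBlocks L) else 0)
      = ∑ p ∈ Finset.HasAntidiagonal.antidiagonal n, ∑ J ∈ cLists p.1, ∑ E ∈ cLists p.2,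
          (if J.length = E.length + 1 then f J E else 0) := by
  have h1 : (∑ L ∈ cLists n, (if Odd L.length then f (oddBlocks L) (evenBlocks L) else 0))
      = ∑ L ∈ cLists n,
          (if (oddBlocks L).length = (evenBlocks L).length + 1
            then f (oddBlocks L) (evenBlocks L) else 0) := by
    refine Finset.sum_congr rfl fun L _ => ?_
    have hlen := blocks_length L
    have hodd : Odd L.length ↔ (oddBlocks L).length = (evenBlocks L).length + 1 := by
      rw [hlen.1, hlen.2, Nat.odd_iff]
      omega
    by_cases h : Odd L.length
    · rw [if_pos h, if_pos (hodd.mp h)]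
    · rw [if_neg h, if_neg (fun hc => h (hodd.mpr hc))]
  refine Eq.trans h1 (Eq.trans
    (interleave_master n (fun J E => if J.length = E.length + 1 then f J E else 0)) ?_)
  refine Finset.sum_congr rfl fun p _ => Finset.sum_congr rfl fun J _ =>
    Finset.sum_congr rfl fun E _ => ?_
  by_cases h : J.length = E.length + 1
  · rw [if_pos ⟨by omega, by omega⟩, if_pos h]
  · rw [if_neg h]
    by_cases hc : E.length ≤ J.length ∧ J.length ≤ E.length + 1
    · rw [if_pos hc]
    · rw [if_neg hc]



lemma coeff_Bpow (b : ℕ → ℝ) (m w : ℕ) :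
    coeff w ((Aseries b)^m)
      = ∑ E ∈ cLists w, ((m.choose E.length : ℕ) : ℝ) * (E.map b).prod := by
  have hb : Aseries b = (Aseries b - 1) + 1 := by ring
  rw [hb, add_pow]
  rw [map_sum]
  have hterm : ∀ k ∈ Finset.range (m+1),
      coeff w ((Aseries b - 1)^k * 1^(m-k) * ((m.choose k : ℕ) : PowerSeries ℝ))
        = ((m.choose k : ℕ) : ℝ) * ∑ E ∈ cLists w, (if E.length = k then (E.map b).prod else 0) := by
    intro k _
    rw [one_pow, mul_one, ← map_natCast C (m.choose k), mul_comm, coeff_C_mul]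
    rw [Aseries_sub_one_eq_cser, single_pow, coeff_cser]
  rw [Finset.sum_congr rfl hterm]
  simp only [Finset.mul_sum]
  rw [Finset.sum_comm]
  refine Finset.sum_congr rfl fun E _ => ?_
  have h : ∀ k, ((m.choose k : ℕ) : ℝ) * (if E.length = k then (E.map b).prod else 0)
      = if E.length = k then ((m.choose E.length : ℕ) : ℝ) * (E.map b).prod else 0 := by
    intro k
    by_cases hk : E.length = k
    · subst hk
      rw [if_pos rfl, if_pos rfl]
    · rw [if_neg hk, if_neg hk, mul_zero]
  rw [Finset.sum_congr rfl (fun k _ => h k)]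
  rw [Finset.sum_ite_eq (Finset.range (m+1)) E.length
    (fun _ => ((m.choose E.length : ℕ) : ℝ) * (E.map b).prod)]
  by_cases hle : E.length ∈ Finset.range (m+1)
  · rw [if_pos hle]
  · rw [if_neg hle]
    rw [Finset.mem_range] at hle
    rw [Nat.choose_eq_zero_of_lt (by omega)]
    simp

lemma claim1 (a b : ℕ → ℝ) (ν : ℕ) :
    (∑ L ∈ cLists ν, (if Odd L.length
        then a ((oddBlocks L).sum) * ((evenBlocks L).map b).prod else 0))
      = ∑ m ∈ Finset.range (ν+1),
          (if m = 0 then 0 else a m * coeff ν (X^m * (Aseries b)^(m-1))) := by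
  rw [interleave_apply ν (fun J E => a J.sum * (E.map b).prod)]
  rw [Finset.Nat.sum_antidiagonal_eq_sum_range_succ_mk]
  refine Finset.sum_congr rfl fun m hm => ?_
  rw [Finset.mem_range] at hm
  rcases Nat.eq_zero_or_pos m with rfl | hm0
  · rw [if_pos rfl, cLists_zero, Finset.sum_singleton]
    exact Finset.sum_eq_zero fun E _ => if_neg (by simp)
  · have hm0' : m ≠ 0 := by omega
    rw [if_neg hm0']
    rw [PowerSeries.coeff_X_pow_mul' (Aseries b ^ (m-1)) m ν, if_pos (by omega)]
    rw [coeff_Bpow b (m-1) (ν - m), Finset.mul_sum]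
    rw [Finset.sum_comm]
    refine Finset.sum_congr rfl fun E hE => ?_
    have hJsum : ∀ J ∈ cLists m,
        (if J.length = E.length + 1 then a J.sum * (E.map b).prod else 0)
          = (if J.length = E.length + 1 then (1:ℝ) else 0) * (a m * (E.map b).prod) := by
      intro J hJ
      obtain ⟨-, hs⟩ := mem_cLists.mp hJ
      by_cases h : J.length = E.length + 1
      · rw [if_pos h, if_pos h, hs, one_mul]
      · rw [if_neg h, if_neg h, zero_mul]
    rw [Finset.sum_congr rfl hJsum, ← Finset.sum_mul, count_comps m hm0' E.length]
    ring

lemma claim1' (a b : ℕ → ℝ) {ν w : ℕ} (h : w ≤ ν) :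
    (∑ L ∈ cLists w, (if Odd L.length
        then a ((oddBlocks L).sum) * ((evenBlocks L).map b).prod else 0))
      = ∑ m ∈ Finset.range (ν+1),
          (if m = 0 then 0 else a m * coeff w (X^m * (Aseries b)^(m-1))) := by
  rw [claim1 a b w]
  refine Finset.sum_subset (by intro x hx; rw [Finset.mem_range] at hx ⊢; omega) ?_
  intro m hm hnm
  rw [Finset.mem_range] at hm
  rw [Finset.mem_range, not_lt] at hnm
  rw [PowerSeries.coeff_X_pow_mul' (Aseries b ^ (m-1)) m w,
    if_neg (show ¬ m ≤ w by omega), mul_zero, ite_self]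

lemma claimII (a b : ℕ → ℝ) :
    Aseries b * cser (fun L => if Odd L.length
        then a ((oddBlocks L).sum) * ((evenBlocks L).map b).prod else 0)
      = substA a (X * Aseries b) - 1 := by
  ext ν
  rw [map_sub, PowerSeries.coeff_mul]
  have hL : ∀ p ∈ Finset.HasAntidiagonal.antidiagonal ν,
      coeff p.1 (Aseries b) * coeff p.2 (cser (fun L => if Odd L.length
        then a ((oddBlocks L).sum) * ((evenBlocks L).map b).prod else 0))
      = ∑ m ∈ Finset.range (ν+1), (if m = 0 then 0
          else a m * (coeff p.1 (Aseries b) * coeff p.2 (X^m * (Aseries b)^(m-1)))) := by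
    intro p hp
    have hle : p.2 ≤ ν := by
      have := Finset.HasAntidiagonal.mem_antidiagonal.mp hp
      omega
    rw [coeff_cser, claim1' a b hle, Finset.mul_sum]
    refine Finset.sum_congr rfl fun m _ => ?_
    by_cases h : m = 0
    · rw [if_pos h, if_pos h, mul_zero]
    · rw [if_neg h, if_neg h]
      ring
  rw [Finset.sum_congr rfl hL, Finset.sum_comm]
  have hR : ∀ m ∈ Finset.range (ν+1),
      (∑ p ∈ Finset.HasAntidiagonal.antidiagonal ν, (if m = 0 then (0:ℝ)
          else a m * (coeff p.1 (Aseries b) * coeff p.2 (X^m * (Aseries b)^(m-1)))))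
      = if m = 0 then 0 else a m * coeff ν (X^m * (Aseries b)^m) := by
    intro m _
    by_cases h : m = 0
    · rw [if_pos h]
      exact Finset.sum_eq_zero fun p _ => if_pos h
    · rw [if_neg h]
      have hsimp : ∀ p ∈ Finset.HasAntidiagonal.antidiagonal ν, (if m = 0 then (0:ℝ)
          else a m * (coeff p.1 (Aseries b) * coeff p.2 (X^m * (Aseries b)^(m-1))))
          = a m * (coeff p.1 (Aseries b) * coeff p.2 (X^m * (Aseries b)^(m-1))) := by
        intro p _
        rw [if_neg h]
      rw [Finset.sum_congr rfl hsimp, ← Finset.mul_sum, ← PowerSeries.coeff_mul]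
      have : Aseries b * (X^m * (Aseries b)^(m-1)) = X^m * (Aseries b)^m := by
        obtain ⟨m', rfl⟩ := Nat.exists_eq_succ_of_ne_zero h
        simp only [Nat.succ_sub_one, Nat.succ_eq_add_one, pow_succ]
        ring
      rw [this]
  rw [Finset.sum_congr rfl hR]
  -- now RHS : coeff ν (substA ..) - coeff ν 1
  have hsub : coeff ν (substA a (X * Aseries b))
      = ∑ k ∈ Finset.range (ν+1), (if k = 0 then 1 else a k) * coeff ν (X^k * (Aseries b)^k) := by
    rw [substA, coeff_mk]
    refine Finset.sum_congr rfl fun k _ => ?_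
    rw [mul_pow]
  rw [hsub]
  rw [Finset.sum_range_succ' (fun m => if m = 0 then (0:ℝ)
      else a m * coeff ν (X^m * (Aseries b)^m)) ν]
  rw [Finset.sum_range_succ' (fun k => (if k = 0 then (1:ℝ) else a k)
      * coeff ν (X^k * (Aseries b)^k)) ν]
  have h0 : coeff ν ((X:PowerSeries ℝ)^0 * (Aseries b)^0) = coeff ν 1 := by
    simp
  rw [h0]
  norm_num


noncomputable def WQf (a b : ℕ → ℝ) (L : List ℕ) : ℝ :=
  if Odd L.length then
    (-1:ℝ)^((oddBlocks L).length - 1) * kstarL a (oddBlocks L)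
      * ((evenBlocks L).map b).prod
  else 0

noncomputable def WPf (a b : ℕ → ℝ) (L : List ℕ) : ℝ :=
  if Odd L.length then a ((oddBlocks L).sum) * ((evenBlocks L).map b).prod else 0

noncomputable def WB1f (b : ℕ → ℝ) (L : List ℕ) : ℝ :=
  if L.length = 1 then b L.sum else 0

lemma exists_two {D : List ℕ} (hD : 2 ≤ D.length) : ∃ x y T, D = x :: y :: T := by
  match D, hD with
  | x :: y :: T, _ => exact ⟨x, y, T, rfl⟩

lemma inner_eq (a b : ℕ → ℝ) (L : List ℕ) (j : ℕ) (hj : j ≤ L.length) :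
    (∑ i ∈ Finset.range ((L.drop j).length + 1),
        WB1f b ((L.drop j).take i) * WQf a b ((L.drop j).drop i))
      = if j < L.length then b ((L.drop j).take 1).sum * WQf a b (L.drop (j+1)) else 0 := by
  have hD : (L.drop j).length = L.length - j := List.length_drop
  by_cases hlt : j < L.length
  · rw [if_pos hlt]
    rw [Finset.sum_eq_single_of_mem 1 (Finset.mem_range.mpr (by omega))]
    · have h1 : ((L.drop j).take 1).length = 1 := by
        rw [List.length_take]
        omega
      rw [WB1f, if_pos h1]
      have h2 : (L.drop j).drop 1 = L.drop (j+1) := by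
        rw [List.drop_drop]
      rw [h2]
    · intro i hi hne
      rw [Finset.mem_range] at hi
      have : ((L.drop j).take i).length = i := by
        rw [List.length_take]
        omega
      rw [WB1f, this, if_neg hne, zero_mul]
  · rw [if_neg hlt]
    have hjl : j = L.length := by omega
    have hnil : L.drop j = [] := by
      rw [hjl, List.drop_length]
    rw [hnil]
    simp [WB1f, WQf]

lemma pointwise (a b : ℕ → ℝ) (L : List ℕ) :
    WQf a b L = WPf a b L - ∑ j ∈ Finset.range (L.length + 1),
      WPf a b (L.take j) * (∑ i ∈ Finset.range ((L.drop j).length + 1),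
        WB1f b ((L.drop j).take i) * WQf a b ((L.drop j).drop i)) := by
  have hlen_take : ∀ j, j ≤ L.length → (L.take j).length = j := by
    intro j hj
    rw [List.length_take]
    omega
  by_cases hodd : Odd L.length
  case neg =>
    have hQ0 : WQf a b L = 0 := if_neg hodd
    have hP0 : WPf a b L = 0 := if_neg hodd
    rw [hQ0, hP0]
    rw [Finset.sum_eq_zero, sub_zero]
    intro j hj
    rw [Finset.mem_range] at hj
    have hj' : j ≤ L.length := by omega
    by_cases hjodd : Odd j
    · rw [inner_eq a b L j hj']
      by_cases hlt : j < L.length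
      · rw [if_pos hlt]
        have hq : WQf a b (L.drop (j+1)) = 0 := by
          refine if_neg ?_
          rw [List.length_drop]
          intro hcon
          rw [Nat.odd_iff] at hcon hjodd
          rw [Nat.odd_iff] at hodd
          omega
        rw [hq, mul_zero, mul_zero]
      · rw [if_neg hlt, mul_zero]
    · have hp : WPf a b (L.take j) = 0 := by
        refine if_neg ?_
        rw [hlen_take j hj']
        exact hjodd
      rw [hp, zero_mul]
  case pos =>
    have hodd' := hodd
    rw [Nat.odd_iff] at hodd'
    set r := L.length with hr
    set s := r / 2 with hsdef
    have hs : r = 2*s + 1 := by omega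
    have hJlen : (oddBlocks L).length = s + 1 := by
      have := (blocks_length L).1
      omega
    have hElen : (evenBlocks L).length = s := by
      have := (blocks_length L).2
      omega
    have hJne : oddBlocks L ≠ [] := by
      intro h
      rw [h] at hJlen
      simp at hJlen
    set J := oddBlocks L with hJdef
    set E := evenBlocks L with hEdef
    -- LHS rewrite
    have hQ : WQf a b L = (-1:ℝ)^s * kstarL a J * ((E).map b).prod := by
      rw [WQf, if_pos hodd, ← hJdef, ← hEdef, hJlen]
      norm_num
    have hP : WPf a b L = a J.sum * (E.map b).prod := by
      rw [WPf, if_pos hodd]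
    -- facts for t < s
    have hmid : ∀ t, t < s →
        E.drop t = ((L.drop (2*t+1)).take 1).sum :: E.drop (t+1) ∧
        oddBlocks (L.drop (2*t+2)) = J.drop (t+1) ∧
        evenBlocks (L.drop (2*t+2)) = E.drop (t+1) := by
      intro t ht
      have hDlen : (L.drop (2*t)).length = r - 2*t := List.length_drop
      obtain ⟨x, y, T, hxy⟩ := exists_two (D := L.drop (2*t)) (by omega)
      have hd1 : L.drop (2*t+1) = y :: T := by
        have h' : L.drop (2*t+1) = (L.drop (2*t)).drop 1 := by
          rw [List.drop_drop]
        rw [h', hxy]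
        simp
      have hd2 : L.drop (2*t+2) = T := by
        have h' : L.drop (2*t+2) = (L.drop (2*t)).drop 2 := by
          rw [List.drop_drop]
        rw [h', hxy]
        simp
      have hEdrop : E.drop t = y :: evenBlocks T := by
        rw [hEdef, ← (oddBlocks_drop t L).2, hxy]
        simp
      have hEdrop1 : E.drop (t+1) = evenBlocks T := by
        rw [hEdef, ← (oddBlocks_drop (t+1) L).2]
        have : 2*(t+1) = 2*t+2 := by ring
        rw [this, hd2]
      refine ⟨?_, ?_, ?_⟩
      · rw [hd1, hEdrop, hEdrop1]
        simp
      · have h1 := (oddBlocks_drop (t+1) L).1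
        rw [show 2*(t+1) = 2*t+2 from by ring, hd2] at h1
        rw [hd2]
        exact h1
      · rw [hd2, hEdrop1]
    -- compute the big sum
    have hbig : (∑ j ∈ Finset.range (L.length + 1),
        WPf a b (L.take j) * (∑ i ∈ Finset.range ((L.drop j).length + 1),
          WB1f b ((L.drop j).take i) * WQf a b ((L.drop j).drop i)))
        = ∑ t ∈ Finset.range s,
            (a ((J.take (t+1)).sum) * ((E.take t).map b).prod)
            * (b ((L.drop (2*t+1)).take 1).sum
               * ((-1:ℝ)^(s - t - 1) * kstarL a (J.drop (t+1))
                  * ((E.drop (t+1)).map b).prod)) := by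
      have h2s : L.length + 1 = 2*(s+1) := by omega
      rw [h2s, sum_range_two_mul (s+1)]
      have heven0 : ∀ t ∈ Finset.range (s+1),
          WPf a b (L.take (2*t)) * (∑ i ∈ Finset.range ((L.drop (2*t)).length + 1),
            WB1f b ((L.drop (2*t)).take i) * WQf a b ((L.drop (2*t)).drop i))
          + WPf a b (L.take (2*t+1)) * (∑ i ∈ Finset.range ((L.drop (2*t+1)).length + 1),
            WB1f b ((L.drop (2*t+1)).take i) * WQf a b ((L.drop (2*t+1)).drop i))
          = WPf a b (L.take (2*t+1)) * (∑ i ∈ Finset.range ((L.drop (2*t+1)).length + 1),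
            WB1f b ((L.drop (2*t+1)).take i) * WQf a b ((L.drop (2*t+1)).drop i)) := by
        intro t ht
        rw [Finset.mem_range] at ht
        have hp0 : WPf a b (L.take (2*t)) = 0 := by
          refine if_neg ?_
          rw [hlen_take (2*t) (by omega), Nat.odd_iff]
          omega
        rw [hp0, zero_mul, zero_add]
      rw [Finset.sum_congr rfl heven0]
      rw [Finset.sum_range_succ]
      have hlast : WPf a b (L.take (2*s+1)) * (∑ i ∈ Finset.range ((L.drop (2*s+1)).length + 1),
          WB1f b ((L.drop (2*s+1)).take i) * WQf a b ((L.drop (2*s+1)).drop i)) = 0 := by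
        rw [inner_eq a b L (2*s+1) (by omega), if_neg (by omega), mul_zero]
      rw [hlast, add_zero]
      refine Finset.sum_congr rfl fun t ht => ?_
      rw [Finset.mem_range] at ht
      rw [inner_eq a b L (2*t+1) (by omega), if_pos (by omega)]
      have hptake : WPf a b (L.take (2*t+1))
          = a ((J.take (t+1)).sum) * ((E.take t).map b).prod := by
        rw [WPf, if_pos (by rw [hlen_take (2*t+1) (by omega), Nat.odd_iff]; omega)]
        rw [(oddBlocks_take t L).1, (oddBlocks_take t L).2, hJdef, hEdef]
      have hwq : WQf a b (L.drop (2*t+1+1))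
          = (-1:ℝ)^(s - t - 1) * kstarL a (J.drop (t+1)) * ((E.drop (t+1)).map b).prod := by
        obtain ⟨-, hJd, hEd⟩ := hmid t ht
        have h22 : 2*t+1+1 = 2*t+2 := by ring
        rw [h22, WQf, hJd, hEd]
        rw [if_pos (by rw [List.length_drop, Nat.odd_iff]; omega)]
        have : (J.drop (t+1)).length = s - t := by
          rw [List.length_drop, hJlen]
          omega
        rw [this]
      rw [hptake, hwq]
    rw [hbig, hQ, hP]
    -- expand kstar
    rw [kstarL_rec a J hJne, hJlen]
    rw [Finset.mul_sum, Finset.sum_mul]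
    rw [Finset.sum_range_succ]
    have hlastterm : (-1:ℝ)^s * ((-1:ℝ)^s * a ((J.take (s+1)).sum) * kstarL a (J.drop (s+1)))
        * (E.map b).prod  = a J.sum * (E.map b).prod := by
      have h1 : J.take (s+1) = J := List.take_of_length_le (by omega)
      have h2 : J.drop (s+1) = [] := List.drop_eq_nil_of_le (by omega)
      rw [h1, h2, kstarL_nil]
      have hee : (-1:ℝ)^s * (-1:ℝ)^s = 1 := by
        rw [← pow_add]
        exact Even.neg_one_pow ⟨s, rfl⟩
      linear_combination (a J.sum * ((E.map b)).prod) * hee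
    rw [hlastterm]
    have hstep : ∀ t ∈ Finset.range s,
        (-1:ℝ)^s * ((-1:ℝ)^t * a ((J.take (t+1)).sum) * kstarL a (J.drop (t+1)))
            * (E.map b).prod
        = - (a ((J.take (t+1)).sum) * ((E.take t).map b).prod
            * (b ((L.drop (2*t+1)).take 1).sum
               * ((-1:ℝ)^(s - t - 1) * kstarL a (J.drop (t+1))
                  * ((E.drop (t+1)).map b).prod))) := by
      intro t ht
      rw [Finset.mem_range] at ht
      have hEprod : (E.map b).prod = ((E.take t).map b).prod
          * (b ((L.drop (2*t+1)).take 1).sum * ((E.drop (t+1)).map b).prod) := by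
        conv_lhs => rw [← List.take_append_drop t E]
        rw [List.map_append, List.prod_append, (hmid t ht).1, List.map_cons, List.prod_cons]
      have hsign : (-1:ℝ)^s * (-1:ℝ)^t = -(-1:ℝ)^(s - t - 1) := by
        have he : s + t = (s - t - 1) + (2*t + 1) := by omega
        rw [← pow_add, he, pow_add]
        have h21 : (-1:ℝ)^(2*t+1) = -1 := Odd.neg_one_pow ⟨t, by ring⟩
        rw [h21]
        ring
      calc (-1:ℝ)^s * ((-1:ℝ)^t * a ((J.take (t+1)).sum) * kstarL a (J.drop (t+1)))
            * (E.map b).prod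
          = ((-1:ℝ)^s * (-1:ℝ)^t) * (a ((J.take (t+1)).sum) * kstarL a (J.drop (t+1)))
              * (E.map b).prod := by ring
        _ = _ := by
            rw [hsign, hEprod]
            ring
    rw [Finset.sum_congr rfl hstep]
    rw [Finset.sum_neg_distrib]
    ring


lemma claimI (a b : ℕ → ℝ) :
    Aseries (momConv a b) - 1
      = cser (WPf a b) - cser (WPf a b) *
          ((Aseries b - 1) * (Aseries (momConv a b) - 1)) := by
  have hQ : Aseries (momConv a b) - 1 = cser (WQf a b) := by
    rw [M_eq_cser a b, one_eq_cser, cser_sub]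
    refine cser_congr fun L _ => ?_
    cases L with
    | nil => simp [WQf]
    | cons x T =>
      rw [WQf]
      simp only [if_neg (List.cons_ne_nil x T), sub_zero]
  rw [hQ, Aseries_sub_one_eq_cser]
  rw [cser_mul, cser_mul, cser_sub]
  exact cser_congr fun L _ => pointwise a b L

lemma claimII' (a b : ℕ → ℝ) :
    Aseries b * cser (WPf a b) = substA a (X * Aseries b) - 1 :=
  claimII a b

lemma key (a b : ℕ → ℝ) :
    Aseries (momConv a b) * (1 + (Aseries b - 1) * substA a (X * Aseries b))
      = Aseries b * substA a (X * Aseries b) := by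
  have h1 := claimI a b
  have h2 := claimII' a b
  linear_combination (Aseries b) * h1
    + (1 - (Aseries b - 1) * (Aseries (momConv a b) - 1)) * h2

theorem stmt6' (a b : ℕ → ℝ) :
    (Aseries (momConv a b))⁻¹ =
      (Aseries b)⁻¹ * (substA a (PowerSeries.X * Aseries b))⁻¹
      - (Aseries b)⁻¹ + 1 := by
  have hM1 : constantCoeff (Aseries (momConv a b)) = 1 := by
    rw [← PowerSeries.coeff_zero_eq_constantCoeff_apply]
    simp [Aseries]
  have hB1 : constantCoeff (Aseries b) = 1 := by
    rw [← PowerSeries.coeff_zero_eq_constantCoeff_apply]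
    simp [Aseries]
  have hS1 : constantCoeff (substA a (X * Aseries b)) = 1 := by
    rw [← PowerSeries.coeff_zero_eq_constantCoeff_apply]
    simp [substA]
  have hM : constantCoeff (Aseries (momConv a b)) ≠ 0 := by rw [hM1]; exact one_ne_zero
  have hB : constantCoeff (Aseries b) ≠ 0 := by rw [hB1]; exact one_ne_zero
  have hS : constantCoeff (substA a (X * Aseries b)) ≠ 0 := by rw [hS1]; exact one_ne_zero
  rw [eq_comm, PowerSeries.eq_inv_iff_mul_eq_one hM]
  have hBS : Aseries b * substA a (X * Aseries b) ≠ 0 := by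
    intro h
    have := congrArg (constantCoeff) h
    rw [map_mul, hB1, hS1, map_zero] at this
    norm_num at this
  apply mul_right_cancel₀ hBS
  have hBinv : (Aseries b)⁻¹ * (Aseries b) = 1 := PowerSeries.inv_mul_cancel _ hB
  have hSinv : (substA a (X * Aseries b))⁻¹ * (substA a (X * Aseries b)) = 1 :=
    PowerSeries.inv_mul_cancel _ hS
  have hkey := key a b
  linear_combination (Aseries (momConv a b)
      * ((substA a (X * Aseries b))⁻¹ * substA a (X * Aseries b))
      - Aseries (momConv a b) * substA a (X * Aseries b)) * hBinv
    + Aseries (momConv a b) * hSinv + hkey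

/-- Theorem 6.2: `F_{μ⊢ν}(z) = F_μ(F_ν(z)) - F_ν(z) + z` as formal power series.
In the variable `X = z⁻¹`: with `a, b` the moment sequences of `μ, ν`,
`F_ν(z) = z⁻¹ · (A_b)⁻¹ ⁻¹`… concretely, multiplying the identity by `z⁻¹`,
it reads `(A_{momConv a b})⁻¹ = A_b⁻¹ · (A_a(X·A_b))⁻¹ - A_b⁻¹ + 1`. -/
theorem stmt6 (μ ν : Measure ℝ)
    [IsProbabilityMeasure μ] [IsProbabilityMeasure ν]
    (hμ : ∀ k : ℕ, Integrable (fun x => x ^ k) μ)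
    (hν : ∀ k : ℕ, Integrable (fun x => x ^ k) ν) :
    (Aseries (momConv (fun k => ∫ x, x ^ k ∂μ) fun k => ∫ x, x ^ k ∂ν))⁻¹ =
      (Aseries fun k => ∫ x, x ^ k ∂ν)⁻¹ *
        (substA (fun k => ∫ x, x ^ k ∂μ)
          (PowerSeries.X * Aseries fun k => ∫ x, x ^ k ∂ν))⁻¹
      - (Aseries fun k => ∫ x, x ^ k ∂ν)⁻¹ + 1 := by
  exact stmt6' _ _
end

section
/- Let (H₁,ξ₁), (H₂,ξ₂) be Hilbert spaces with distinguished unit vectors, and define on H₁ ⊗ H₂ the operators τ₁(a) (acting as a ⊗ P₂ conjugated via the canonical isometry U from the orthogonal product into H₁⊗H₂) and τ₂(b) = U*(P₁^⊥ ⊗ b)U, where P₁, P₂ are projections onto ℂξ₁, ℂξ₂. Let φ be the vector state at ξ = U*(ξ₁⊗ξ₂) and ψ the vector state at any unit vector η ∈ H₁ ⊖ ℂξ₁. Then the algebra A₂ = τ₂(B(H₂)) is orthogonal to A₁ = τ₁(B(H₁)) with respect to (φ, ψ): (i) φ(w τ₂(b)) = φ(τ₂(b) w) = 0 and (ii) φ(w₁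 τ₁(a₁) τ₂(b) τ₁(a₂) w₂) = ψ(τ₂(b)) (φ(w₁ τ₁(a₁) τ₁(a₂) w₂) - φ(w₁ τ₁(a₁)) φ(τ₁(a₂) w₂)) for all a₁, a₂ ∈ B(H₁), b ∈ B(H₂), and w, w₁, w₂ in the algebra generated by A₁ and A₂. Moreover φ∘τ₁ = ⟨·ξ₁,ξ₁⟩ and ψ∘τ₂ = ⟨·ξ₂,ξ₂⟩. -/
open scoped InnerProductSpace

noncomputable section

variable {H₁ H₂ T K : Type*}
  [NormedAddCommGroup H₁] [InnerProductSpace ℂ H₁] [CompleteSpace H₁]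
  [NormedAddCommGroup H₂] [InnerProductSpace ℂ H₂] [CompleteSpace H₂]
  [NormedAddCommGroup T] [InnerProductSpace ℂ T] [CompleteSpace T]
  [NormedAddCommGroup K] [InnerProductSpace ℂ K] [CompleteSpace K]

/-- The orthogonal projection onto the line `ℂ v`, as an operator. -/
def projSpan (v : T) : T →L[ℂ] T :=
  (ℂ ∙ v).subtypeL.comp ((ℂ ∙ v).orthogonalProjectionOnto)

/-- `τ₁(a) = U* (a ⊗ P₂) U`, where `U` is the canonical isometry of the
orthogonal product into `H₁ ⊗ H₂` and `P₂` the projection onto `ℂ ξ₂`. -/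
def tau1 (tens : (H₁ →L[ℂ] H₁) → (H₂ →L[ℂ] H₂) → (T →L[ℂ] T))
    (U : K →ₗᵢ[ℂ] T) (ξ₂ : H₂) (a : H₁ →L[ℂ] H₁) : K →L[ℂ] K :=
  (ContinuousLinearMap.adjoint U.toContinuousLinearMap).comp
    ((tens a (projSpan ξ₂)).comp U.toContinuousLinearMap)

/-- `τ₂(b) = U* (P₁^⊥ ⊗ b) U`, where `P₁^⊥ = 1 - P₁` and `P₁` is the projection
onto `ℂ ξ₁`. -/
def tau2 (tens : (H₁ →L[ℂ] H₁) → (H₂ →L[ℂ] H₂) → (T →L[ℂ] T))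
    (U : K →ₗᵢ[ℂ] T) (ξ₁ : H₁) (b : H₂ →L[ℂ] H₂) : K →L[ℂ] K :=
  (ContinuousLinearMap.adjoint U.toContinuousLinearMap).comp
    ((tens (1 - projSpan ξ₁) b).comp U.toContinuousLinearMap)

/-- Theorem 4.1 (orthogonal product of Hilbert spaces).  Let `(H₁,ξ₁), (H₂,ξ₂)`
be Hilbert spaces with distinguished unit vectors, and let `T` be their Hilbert
tensor product: `tmul` is bilinear with `⟪x ⊗ y, x' ⊗ y'⟫ = ⟪x,x'⟫⟪y,y'⟫` and
`tens a b` is the operator `a ⊗ b`.  Let `U : K →ₗᵢ T` be the canonical isometry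
of the orthogonal product `K = (H₁,ξ₁) ⊢ (H₂,ξ₂)` into `H₁ ⊗ H₂`, characterized
by `range U = (ℂξ₁ ⊗ H₂⁰)^⊥` (equivalently `U U* = 1 - P_{ℂξ₁⊗H₂⁰}`).  Let `φ`
be the vector state at `ξ = U*(ξ₁ ⊗ ξ₂)` and `ψ` the vector state at
`U*(η ⊗ ξ₂)` for a unit vector `η ⟂ ξ₁` (i.e. a unit vector of `H₁⁰ ⊂ K`).
Then `A₂ = τ₂(B(H₂))` is orthogonal to `A₁ = τ₁(B(H₁))` with respect to
`(φ, ψ)`: (i) `φ(w τ₂(b)) = φ(τ₂(b) w) = 0`, (ii)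
`φ(w₁ τ₁(a₁) τ₂(b) τ₁(a₂) w₂) = ψ(τ₂(b)) (φ(w₁ τ₁(a₁) τ₁(a₂) w₂) - φ(w₁ τ₁(a₁)) φ(τ₁(a₂) w₂))`
for all `w, w₁, w₂` in the algebra generated by `A₁ ∪ A₂`; moreover
`φ ∘ τ₁` and `ψ ∘ τ₂` are the vector states at `ξ₁` and `ξ₂`. -/
theorem stmt14 (ξ₁ : H₁) (ξ₂ : H₂) (hξ₁ : ‖ξ₁‖ = 1) (hξ₂ : ‖ξ₂‖ = 1)
    (tmul : H₁ →ₗ[ℂ] H₂ →ₗ[ℂ] T)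
    (htmul : ∀ (x x' : H₁) (y y' : H₂),
      ⟪tmul x y, tmul x' y'⟫_ℂ = ⟪x, x'⟫_ℂ * ⟪y, y'⟫_ℂ)
    (tens : (H₁ →L[ℂ] H₁) → (H₂ →L[ℂ] H₂) → (T →L[ℂ] T))
    (htens : ∀ (a : H₁ →L[ℂ] H₁) (b : H₂ →L[ℂ] H₂) (x : H₁) (y : H₂),
      tens a b (tmul x y) = tmul (a x) (b y))
    (U : K →ₗᵢ[ℂ] T)
    (hU : ∀ t : T, (∃ k : K, U k = t) ↔
      ∀ y : H₂, ⟪ξ₂, y⟫_ℂ = 0 → ⟪tmul ξ₁ y, t⟫_ℂ = 0)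
    (η : H₁) (hη : ‖η‖ = 1) (hηξ : ⟪ξ₁, η⟫_ℂ = 0)
    -- the vector states:
    (φ ψ : (K →L[ℂ] K) → ℂ)
    (hφ : ∀ X : K →L[ℂ] K,
      φ X = ⟪ContinuousLinearMap.adjoint U.toContinuousLinearMap (tmul ξ₁ ξ₂),
             X (ContinuousLinearMap.adjoint U.toContinuousLinearMap (tmul ξ₁ ξ₂))⟫_ℂ)
    (hψ : ∀ X : K →L[ℂ] K,
      ψ X = ⟪ContinuousLinearMap.adjoint U.toContinuousLinearMap (tmul η ξ₂),
             X (ContinuousLinearMap.adjoint U.toContinuousLinearMap (tmul η ξ₂))⟫_ℂ) :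
    -- (i) orthogonality, first condition
    (∀ (b : H₂ →L[ℂ] H₂),
      ∀ w ∈ Algebra.adjoin ℂ
        (Set.range (tau1 tens U ξ₂) ∪ Set.range (tau2 tens U ξ₁)),
        φ (w * tau2 tens U ξ₁ b) = 0 ∧ φ (tau2 tens U ξ₁ b * w) = 0) ∧
    -- (ii) orthogonality, second condition
    (∀ (a₁ a₂ : H₁ →L[ℂ] H₁) (b : H₂ →L[ℂ] H₂),
      ∀ w₁ ∈ Algebra.adjoin ℂ
        (Set.range (tau1 tens U ξ₂) ∪ Set.range (tau2 tens U ξ₁)),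
      ∀ w₂ ∈ Algebra.adjoin ℂ
        (Set.range (tau1 tens U ξ₂) ∪ Set.range (tau2 tens U ξ₁)),
        φ (w₁ * tau1 tens U ξ₂ a₁ * tau2 tens U ξ₁ b * tau1 tens U ξ₂ a₂ * w₂) =
          ψ (tau2 tens U ξ₁ b) *
            (φ (w₁ * tau1 tens U ξ₂ a₁ * tau1 tens U ξ₂ a₂ * w₂) -
              φ (w₁ * tau1 tens U ξ₂ a₁) * φ (tau1 tens U ξ₂ a₂ * w₂))) ∧
    -- φ ∘ τ₁ is the vector state at ξ₁
    (∀ a : H₁ →L[ℂ] H₁, φ (tau1 tens U ξ₂ a) = ⟪ξ₁, a ξ₁⟫_ℂ) ∧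
    -- ψ ∘ τ₂ is the vector state at ξ₂
    (∀ b : H₂ →L[ℂ] H₂, ψ (tau2 tens U ξ₁ b) = ⟪ξ₂, b ξ₂⟫_ℂ) := by

  classical
  set U' := U.toContinuousLinearMap with hU'def
  set Ua := ContinuousLinearMap.adjoint U.toContinuousLinearMap with hUadef
  have hi1 : ⟪ξ₁, ξ₁⟫_ℂ = 1 := by
    rw [inner_self_eq_norm_sq_to_K, hξ₁]; norm_num
  have hi2 : ⟪ξ₂, ξ₂⟫_ℂ = 1 := by
    rw [inner_self_eq_norm_sq_to_K, hξ₂]; norm_num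
  have hiη : ⟪η, η⟫_ℂ = 1 := by
    rw [inner_self_eq_norm_sq_to_K, hη]; norm_num
  have hP1 : ∀ x : H₁, projSpan ξ₁ x = ⟪ξ₁, x⟫_ℂ • ξ₁ := fun x => by
    exact Submodule.starProjection_unit_singleton ℂ hξ₁ x
  have hP2 : ∀ y : H₂, projSpan ξ₂ y = ⟪ξ₂, y⟫_ℂ • ξ₂ := fun y => by
    exact Submodule.starProjection_unit_singleton ℂ hξ₂ y
  have hUaU : ∀ k : K, Ua (U' k) = k := fun k => by
    apply ext_inner_right ℂ
    intro k'
    rw [hUadef, ContinuousLinearMap.adjoint_inner_left]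
    exact U.inner_map_map k k'
  set C : T → Prop := fun t => ∀ y : H₂, ⟪ξ₂, y⟫_ℂ = 0 → ⟪tmul ξ₁ y, t⟫_ℂ = 0 with hCdef
  have hrange : ∀ t : T, C t → U' (Ua t) = t := by
    intro t ht
    obtain ⟨k, hk⟩ := (hU t).mpr ht
    have : U' k = t := hk
    rw [← this, hUaU]
  have hC : ∀ (x : H₁) (y : H₂), (⟪ξ₁, x⟫_ℂ = 0 ∨ y = ξ₂) → C (tmul x y) := by
    rintro x y h y' hy'
    rw [htmul]
    rcases h with h | h
    · rw [h, zero_mul]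
    · have h2 : ⟪y', y⟫_ℂ = 0 := by rw [h, ← inner_conj_symm, hy', map_zero]
      rw [h2, mul_zero]
  have hinn : ∀ t t' : T, C t' → ⟪Ua t, Ua t'⟫_ℂ = ⟪t, t'⟫_ℂ := by
    intro t t' h
    rw [hUadef, ContinuousLinearMap.adjoint_inner_left]
    rw [← hUadef, hrange t' h]
  have htau1 : ∀ (a : H₁ →L[ℂ] H₁) (k : K),
      tau1 tens U ξ₂ a k = Ua (tens a (projSpan ξ₂) (U' k)) := fun a k => rfl
  have htau2 : ∀ (b : H₂ →L[ℂ] H₂) (k : K),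
      tau2 tens U ξ₁ b k = Ua (tens (1 - projSpan ξ₁) b (U' k)) := fun b k => rfl
  have hact1 : ∀ (a : H₁ →L[ℂ] H₁) (x : H₁) (y : H₂), C (tmul x y) →
      tau1 tens U ξ₂ a (Ua (tmul x y)) = ⟪ξ₂, y⟫_ℂ • Ua (tmul (a x) ξ₂) := by
    intro a x y hCt
    rw [htau1, hrange _ hCt, htens, hP2, map_smul, map_smul]
  have hact2 : ∀ (b : H₂ →L[ℂ] H₂) (x : H₁) (y : H₂), C (tmul x y) →
      tau2 tens U ξ₁ b (Ua (tmul x y)) = Ua (tmul (x - ⟪ξ₁, x⟫_ℂ • ξ₁) (b y)) := by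
    intro b x y hCt
    rw [htau2, hrange _ hCt, htens]
    congr 2
    rw [ContinuousLinearMap.sub_apply, ContinuousLinearMap.one_apply, hP1]
  set S : Set K := {k | ∃ (x : H₁) (y : H₂), (⟪ξ₁, x⟫_ℂ = 0 ∨ y = ξ₂) ∧ k = Ua (tmul x y)}
    with hSdef
  set M := Submodule.span ℂ S with hMdef
  have hSmem : ∀ x : H₁, Ua (tmul x ξ₂) ∈ M :=
    fun x => Submodule.subset_span ⟨x, ξ₂, Or.inr rfl, rfl⟩
  have hvadd : ∀ z₁ z₂ : H₁, Ua (tmul z₁ ξ₂) + Ua (tmul z₂ ξ₂) = Ua (tmul (z₁ + z₂) ξ₂) := by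
    intro z₁ z₂
    rw [map_add tmul, LinearMap.add_apply, map_add]
  have hvsmul : ∀ (c : ℂ) (z : H₁), c • Ua (tmul z ξ₂) = Ua (tmul (c • z) ξ₂) := by
    intro c z
    rw [map_smul tmul, LinearMap.smul_apply, map_smul]
  have hT1V : ∀ (a : H₁ →L[ℂ] H₁) (k : K), k ∈ M →
      ∃ z : H₁, tau1 tens U ξ₂ a k = Ua (tmul z ξ₂) := by
    intro a k hk
    induction hk using Submodule.span_induction with
    | mem k hkS =>
      obtain ⟨x, y, hxy, rfl⟩ := hkS
      exact ⟨⟪ξ₂, y⟫_ℂ • a x, by rw [hact1 a x y (hC x y hxy), hvsmul]⟩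
    | zero => exact ⟨0, by simp⟩
    | add x y hx hy ihx ihy =>
      obtain ⟨z₁, h₁⟩ := ihx
      obtain ⟨z₂, h₂⟩ := ihy
      exact ⟨z₁ + z₂, by rw [map_add, h₁, h₂, hvadd]⟩
    | smul c x hx ih =>
      obtain ⟨z, h⟩ := ih
      exact ⟨c • z, by rw [map_smul, h, hvsmul]⟩
  have hT2M : ∀ (b : H₂ →L[ℂ] H₂) (k : K), k ∈ M → tau2 tens U ξ₁ b k ∈ M := by
    intro b k hk
    induction hk using Submodule.span_induction with
    | mem k hkS =>
      obtain ⟨x, y, hxy, rfl⟩ := hkS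
      rw [hact2 b x y (hC x y hxy)]
      refine Submodule.subset_span ⟨x - ⟪ξ₁, x⟫_ℂ • ξ₁, b y, Or.inl ?_, rfl⟩
      rw [inner_sub_right, inner_smul_right, hi1, mul_one, sub_self]
    | zero => rw [map_zero]; exact M.zero_mem
    | add x y hx hy ihx ihy => rw [map_add]; exact M.add_mem ihx ihy
    | smul c x hx ih => rw [map_smul]; exact M.smul_mem c ih
  have hWM : ∀ w ∈ Algebra.adjoin ℂ
      (Set.range (tau1 tens U ξ₂) ∪ Set.range (tau2 tens U ξ₁)),
      ∀ k ∈ M, w k ∈ M := by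
    intro w hw
    induction hw using Algebra.adjoin_induction with
    | mem g hg =>
      intro k hk
      rcases hg with ⟨a, rfl⟩ | ⟨b, rfl⟩
      · obtain ⟨z, hz⟩ := hT1V a k hk
        rw [hz]; exact hSmem z
      · exact hT2M b k hk
    | algebraMap r =>
      intro k hk
      have : (algebraMap ℂ (K →L[ℂ] K)) r k = r • k := by
        simp [Algebra.algebraMap_eq_smul_one]
      rw [this]; exact M.smul_mem r hk
    | add w₁ w₂ h₁ h₂ ih₁ ih₂ =>
      intro k hk
      rw [ContinuousLinearMap.add_apply]
      exact M.add_mem (ih₁ k hk) (ih₂ k hk)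
    | mul w₁ w₂ h₁ h₂ ih₁ ih₂ =>
      intro k hk
      rw [ContinuousLinearMap.mul_apply]
      exact ih₁ _ (ih₂ k hk)
  have hξM : Ua (tmul ξ₁ ξ₂) ∈ M := hSmem ξ₁
  have hzero : ∀ (b : H₂ →L[ℂ] H₂) (k : K), k ∈ M →
      ⟪Ua (tmul ξ₁ ξ₂), tau2 tens U ξ₁ b k⟫_ℂ = 0 := by
    intro b k hk
    induction hk using Submodule.span_induction with
    | mem k hkS =>
      obtain ⟨x, y, hxy, rfl⟩ := hkS
      have horth : ⟪ξ₁, x - ⟪ξ₁, x⟫_ℂ • ξ₁⟫_ℂ = 0 := by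
        rw [inner_sub_right, inner_smul_right, hi1, mul_one, sub_self]
      rw [hact2 b x y (hC x y hxy), hinn _ _ (hC _ _ (Or.inl horth)), htmul, horth, zero_mul]
    | zero => rw [map_zero, inner_zero_right]
    | add x y hx hy ihx ihy => rw [map_add, inner_add_right, ihx, ihy, add_zero]
    | smul c x hx ih => rw [map_smul, inner_smul_right, ih, mul_zero]
  have hτ2ξ : ∀ b : H₂ →L[ℂ] H₂, tau2 tens U ξ₁ b (Ua (tmul ξ₁ ξ₂)) = 0 := by
    intro b
    rw [hact2 b ξ₁ ξ₂ (hC _ _ (Or.inr rfl)), hi1, one_smul, sub_self]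
    simp
  have hinnξv : ∀ z : H₁, ⟪Ua (tmul ξ₁ ξ₂), Ua (tmul z ξ₂)⟫_ℂ = ⟪ξ₁, z⟫_ℂ := by
    intro z
    rw [hinn _ _ (hC _ _ (Or.inr rfl)), htmul, hi2, mul_one]
  have hτ1v : ∀ (a : H₁ →L[ℂ] H₁) (z : H₁),
      tau1 tens U ξ₂ a (Ua (tmul z ξ₂)) = Ua (tmul (a z) ξ₂) := by
    intro a z
    rw [hact1 a z ξ₂ (hC _ _ (Or.inr rfl)), hi2, one_smul]
  have hψτ2 : ∀ b : H₂ →L[ℂ] H₂, ψ (tau2 tens U ξ₁ b) = ⟪ξ₂, b ξ₂⟫_ℂ := by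
    intro b
    rw [hψ, hact2 b η ξ₂ (hC _ _ (Or.inr rfl)), hηξ, zero_smul, sub_zero,
      hinn _ _ (hC _ _ (Or.inl hηξ)), htmul, hiη, one_mul]
  have hφτ1 : ∀ a : H₁ →L[ℂ] H₁, φ (tau1 tens U ξ₂ a) = ⟪ξ₁, a ξ₁⟫_ℂ := by
    intro a
    rw [hφ, hτ1v, hinnξv]
  refine ⟨?_, ?_, hφτ1, hψτ2⟩
  · intro b w hw
    constructor
    · rw [hφ, ContinuousLinearMap.mul_apply, hτ2ξ b, map_zero, inner_zero_right]
    · rw [hφ, ContinuousLinearMap.mul_apply]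
      exact hzero b _ (hWM w hw _ hξM)
  · intro a₁ a₂ b w₁ hw₁ w₂ hw₂
    obtain ⟨z, hz⟩ := hT1V a₂ _ (hWM w₂ hw₂ _ hξM)
    have hz' : ⟪ξ₁, z - ⟪ξ₁, z⟫_ℂ • ξ₁⟫_ℂ = 0 := by
      rw [inner_sub_right, inner_smul_right, hi1, mul_one, sub_self]
    rw [hφ, hφ, hφ, hφ, hψτ2]
    simp only [ContinuousLinearMap.mul_apply]
    rw [hz, hact2 b z ξ₂ (hC _ _ (Or.inr rfl)), hact1 a₁ _ _ (hC _ _ (Or.inl hz')),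
      hτ1v a₁ z, hτ1v a₁ ξ₁, hinnξv z, map_sub a₁, map_smul a₁]
    have hsplit : tmul (a₁ z - ⟪ξ₁, z⟫_ℂ • a₁ ξ₁) ξ₂
        = tmul (a₁ z) ξ₂ - ⟪ξ₁, z⟫_ℂ • tmul (a₁ ξ₁) ξ₂ := by
      rw [map_sub tmul, map_smul tmul, LinearMap.sub_apply, LinearMap.smul_apply]
    rw [hsplit, map_sub Ua, map_smul Ua, map_smul w₁, map_sub w₁, map_smul w₁,
      inner_smul_right, inner_sub_right, inner_smul_right]
    ring

end
end

section
/- Let (a,b) be a pair of elements of a unital algebra A orthogonal with respect to a pair of normalized linear functionals (φ, ψ), with φ-distribution of a having moments μ(k) and ψ-distribution of b having moments ν(l). Then for each m ≥ 1, the moment φ((a+b)^m) depends only on μ(1),...,μ(m) and ν(1),...,ν(m-2); in particular φ(a+b) = μ(1) and φ((a+b)²) = μ(2). -/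
universe u v

/-- The pair `(a, b)` of elements of a unital algebra `A` is orthogonal with
respect to the pair of normalized linear functionals `(φ, ψ)`: writing
`⟨b⟩, ⟨a⟩` for the non-unital subalgebras generated by `b` resp. `a` and
`alg(a,b)` for the (unital) algebra generated by `a` and `b`,
(i) `φ(w b') = φ(b' w) = 0` for `b' ∈ ⟨b⟩` and `w ∈ alg(a,b)`;
(ii) `φ(w₁ a₁ b' a₂ w₂) = ψ(b') (φ(w₁ a₁ a₂ w₂) - φ(w₁ a₁) φ(a₂ w₂))`
for `a₁, a₂ ∈ ⟨a⟩`, `b' ∈ ⟨b⟩`, `w₁, w₂ ∈ alg(a,b)`. -/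
def OrthogonalPair (A : Type u) [Ring A] [Algebra ℂ A]
    (φ ψ : A →ₗ[ℂ] ℂ) (a b : A) : Prop :=
  (∀ b' ∈ NonUnitalAlgebra.adjoin ℂ ({b} : Set A),
    ∀ w ∈ Algebra.adjoin ℂ ({a, b} : Set A), φ (w * b') = 0 ∧ φ (b' * w) = 0) ∧
  (∀ a₁ ∈ NonUnitalAlgebra.adjoin ℂ ({a} : Set A),
   ∀ a₂ ∈ NonUnitalAlgebra.adjoin ℂ ({a} : Set A),
   ∀ b' ∈ NonUnitalAlgebra.adjoin ℂ ({b} : Set A),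
   ∀ w₁ ∈ Algebra.adjoin ℂ ({a, b} : Set A),
   ∀ w₂ ∈ Algebra.adjoin ℂ ({a, b} : Set A),
     φ (w₁ * a₁ * b' * a₂ * w₂) =
       ψ b' * (φ (w₁ * a₁ * a₂ * w₂) - φ (w₁ * a₁) * φ (a₂ * w₂)))

/-!
Expanding `(a + b) ^ m` reduces everything to words in `a` and `b`. Orthogonality evaluates `φ`
on a word recursively: the value is `0` if the word begins or ends with `b`, a moment of `a` if
the word contains no `b`, and otherwise an inner block `a b^l a` is removed at the cost of the
factor `ψ (b ^ l)`, leaving shorter words. A word of length `m` therefore only involves `φ (a ^ k)`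
for `k ≤ m` and `ψ (b ^ l)` for `l ≤ m - 2`, so two orthogonal pairs with matching moments give
the same value. The cases `m = 1, 2` follow by comparing with the orthogonal pair `(a, 0)`.
-/

namespace List

theorem cons_true_eq_append_true_or_true_block (v : List Bool) :
    (∃ u, true :: v = u ++ [true]) ∨
      ∃ l u, 0 < l ∧ true :: v = replicate l true ++ false :: u := by
  induction v with
  | nil => exact .inl ⟨[], rfl⟩
  | cons c s ih =>
    cases c
    · exact .inr ⟨1, s, Nat.one_pos, rfl⟩
    · rcases ih with ⟨u, hu⟩ | ⟨l, u, hl, hu⟩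
      · exact .inl ⟨true :: u, by rw [hu]; rfl⟩
      · exact .inr ⟨l + 1, u, l.succ_pos, by rw [hu]; rfl⟩

theorem bool_cases_inner_true_block (w : List Bool) :
    (∃ k, w = replicate k false) ∨ (∃ v, w = true :: v) ∨ (∃ v, w = v ++ [true]) ∨
      ∃ u l v, 0 < l ∧ w = u ++ false :: (replicate l true ++ false :: v) := by
  induction w with
  | nil => exact .inl ⟨0, rfl⟩
  | cons c t ih =>
    cases c
    · rcases ih with ⟨k, rfl⟩ | ⟨v, rfl⟩ | ⟨v, rfl⟩ | ⟨u, l, v, hl, rfl⟩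
      · exact .inl ⟨k + 1, rfl⟩
      · rcases cons_true_eq_append_true_or_true_block v with ⟨u, hu⟩ | ⟨l, u, hl, hu⟩
        · exact .inr <| .inr <| .inl ⟨false :: u, by rw [hu]; rfl⟩
        · exact .inr <| .inr <| .inr ⟨[], l, u, hl, by rw [hu]; rfl⟩
      · exact .inr <| .inr <| .inl ⟨false :: v, rfl⟩
      · exact .inr <| .inr <| .inr ⟨false :: u, l, v, hl, rfl⟩
    · exact .inr <| .inl ⟨t, rfl⟩

end List

section BoolWord

variable {M : Type*} [Monoid M]

def boolWord (a b : M) (w : List Bool) : M := (w.map (cond · b a)).prod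

@[simp] theorem boolWord_nil (a b : M) : boolWord a b [] = 1 := rfl

@[simp] theorem boolWord_cons (a b : M) (c : Bool) (w : List Bool) :
    boolWord a b (c :: w) = cond c b a * boolWord a b w := rfl

@[simp] theorem boolWord_append (a b : M) (u v : List Bool) :
    boolWord a b (u ++ v) = boolWord a b u * boolWord a b v := by
  simp [boolWord]

@[simp] theorem boolWord_replicate (a b : M) (c : Bool) (k : ℕ) :
    boolWord a b (List.replicate k c) = cond c b a ^ k := by
  simp [boolWord]

end BoolWord

theorem add_pow_eq_sum_boolWord {A : Type*} [Semiring A] (a b : A) (m : ℕ) :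
    (a + b) ^ m = ∑ w : Fin m → Bool, boolWord a b (List.ofFn w) := by
  induction m with
  | zero => simp
  | succ m ih =>
    rw [pow_succ', ih, ← (Fin.consEquiv fun _ => Bool).sum_comp, Fintype.sum_prod_type,
      Fintype.sum_bool, add_comm a b, add_mul, Finset.mul_sum, Finset.mul_sum]
    simp [Fin.consEquiv, List.ofFn_succ]

theorem boolWord_mem_adjoin {R A : Type*} [CommSemiring R] [Semiring A] [Algebra R A]
    (a b : A) (w : List Bool) : boolWord a b w ∈ Algebra.adjoin R ({a, b} : Set A) := by
  refine Subalgebra.list_prod_mem _ fun x hx => ?_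
  obtain ⟨c, -, rfl⟩ := List.mem_map.1 hx
  cases c <;> exact Algebra.subset_adjoin (by simp)

theorem pow_mem_nonUnitalAlgebra_adjoin_singleton {R A : Type*} [CommSemiring R] [Semiring A]
    [Algebra R A] (x : A) {k : ℕ} (hk : 0 < k) :
    x ^ k ∈ NonUnitalAlgebra.adjoin R ({x} : Set A) := by
  induction k, hk using Nat.le_induction with
  | base => simp [NonUnitalAlgebra.self_mem_adjoin_singleton]
  | succ k _ ih => exact pow_succ x k ▸ mul_mem ih (NonUnitalAlgebra.self_mem_adjoin_singleton R x)

namespace OrthogonalPair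

variable {A : Type*} [Ring A] [Algebra ℂ A] {φ ψ : A →ₗ[ℂ] ℂ} {a b : A}

theorem map_boolWord_cons_true (h : OrthogonalPair A φ ψ a b) (v : List Bool) :
    φ (boolWord a b (true :: v)) = 0 :=
  (h.1 b (NonUnitalAlgebra.self_mem_adjoin_singleton ℂ b) _ (boolWord_mem_adjoin a b v)).2

theorem map_boolWord_append_true (h : OrthogonalPair A φ ψ a b) (v : List Bool) :
    φ (boolWord a b (v ++ [true])) = 0 := by
  simpa using
    (h.1 b (NonUnitalAlgebra.self_mem_adjoin_singleton ℂ b) _ (boolWord_mem_adjoin a b v)).1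

theorem map_boolWord_inner_true_block (h : OrthogonalPair A φ ψ a b) (u v : List Bool)
    {l : ℕ} (hl : 0 < l) :
    φ (boolWord a b (u ++ false :: (List.replicate l true ++ false :: v))) =
      ψ (b ^ l) * (φ (boolWord a b (u ++ false :: false :: v)) -
        φ (boolWord a b (u ++ [false])) * φ (boolWord a b (false :: v))) := by
  have ha := NonUnitalAlgebra.self_mem_adjoin_singleton ℂ a
  simpa [mul_assoc] using h.2 a ha a ha (b ^ l) (pow_mem_nonUnitalAlgebra_adjoin_singleton b hl)
    _ (boolWord_mem_adjoin a b u) _ (boolWord_mem_adjoin a b v)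

theorem zero_right (φ ψ : A →ₗ[ℂ] ℂ) (a : A) : OrthogonalPair A φ ψ a 0 := by
  have h0 : NonUnitalAlgebra.adjoin ℂ ({0} : Set A) = ⊥ :=
    le_bot_iff.1 (NonUnitalAlgebra.adjoin_le (by simp))
  simp [OrthogonalPair, h0, NonUnitalAlgebra.mem_bot]

variable {A' : Type*} [Ring A'] [Algebra ℂ A'] {φ' ψ' : A' →ₗ[ℂ] ℂ} {a' b' : A'}

theorem map_boolWord_eq_of_moments_eq (h : OrthogonalPair A φ ψ a b)
    (h' : OrthogonalPair A' φ' ψ' a' b') (hφ : φ 1 = 1) (hφ' : φ' 1 = 1) {n : ℕ}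
    (hμ : ∀ k : ℕ, 1 ≤ k → k ≤ n → φ' (a' ^ k) = φ (a ^ k))
    (hν : ∀ l : ℕ, 1 ≤ l → l ≤ n - 2 → ψ' (b' ^ l) = ψ (b ^ l))
    (w : List Bool) (hw : w.length ≤ n) : φ' (boolWord a' b' w) = φ (boolWord a b w) := by
  rcases w.bool_cases_inner_true_block with ⟨k, rfl⟩ | ⟨v, rfl⟩ | ⟨v, rfl⟩ | ⟨u, l, v, hl, rfl⟩
  · rcases Nat.eq_zero_or_pos k with rfl | hk
    · simp [hφ, hφ']
    · simpa using hμ k hk (by simpa using hw)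
  · rw [h.map_boolWord_cons_true, h'.map_boolWord_cons_true]
  · rw [h.map_boolWord_append_true, h'.map_boolWord_append_true]
  · simp only [List.length_append, List.length_cons, List.length_replicate] at hw
    rw [h.map_boolWord_inner_true_block u v hl, h'.map_boolWord_inner_true_block u v hl,
      hν l hl (by omega),
      h.map_boolWord_eq_of_moments_eq h' hφ hφ' hμ hν (u ++ false :: false :: v) (by simp; omega),
      h.map_boolWord_eq_of_moments_eq h' hφ hφ' hμ hν (u ++ [false]) (by simp; omega),
      h.map_boolWord_eq_of_moments_eq h' hφ hφ' hμ hν (false :: v) (by simp; omega)]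
termination_by w.length
decreasing_by all_goals subst_vars; simp <;> omega

theorem map_add_pow_eq_of_moments_eq (h : OrthogonalPair A φ ψ a b)
    (h' : OrthogonalPair A' φ' ψ' a' b') (hφ : φ 1 = 1) (hφ' : φ' 1 = 1) (m : ℕ)
    (hμ : ∀ k : ℕ, 1 ≤ k → k ≤ m → φ' (a' ^ k) = φ (a ^ k))
    (hν : ∀ l : ℕ, 1 ≤ l → l ≤ m - 2 → ψ' (b' ^ l) = ψ (b ^ l)) :
    φ' ((a' + b') ^ m) = φ ((a + b) ^ m) := by
  simp only [add_pow_eq_sum_boolWord, map_sum]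
  exact Finset.sum_congr rfl fun w _ =>
    h.map_boolWord_eq_of_moments_eq h' hφ hφ' hμ hν _ (List.length_ofFn ▸ le_rfl)

end OrthogonalPair

/-- Proposition 5.2: if `(a, b)` is orthogonal w.r.t. `(φ, ψ)`, then for each
`m ≥ 1` the moment `φ((a+b)^m)` depends only on the moments
`μ(1),…,μ(m)` of `a` (w.r.t. `φ`) and `ν(1),…,ν(m-2)` of `b` (w.r.t. `ψ`):
any other orthogonal pair with matching moments has the same `m`-th moment of
the sum.  In particular `φ(a+b) = φ(a)` and `φ((a+b)²) = φ(a²)`. -/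
theorem stmt15 :
    ∀ (A : Type u) [instR : Ring A] [instA : Algebra ℂ A]
      (φ ψ : A →ₗ[ℂ] ℂ) (a b : A),
      φ 1 = 1 → ψ 1 = 1 → OrthogonalPair A φ ψ a b →
      (φ (a + b) = φ a) ∧ (φ ((a + b) ^ 2) = φ (a ^ 2)) ∧
      ∀ m : ℕ, 1 ≤ m →
        ∀ (A' : Type v) [instR' : Ring A'] [instA' : Algebra ℂ A']
          (φ' ψ' : A' →ₗ[ℂ] ℂ) (a' b' : A'),
          φ' 1 = 1 → ψ' 1 = 1 → OrthogonalPair A' φ' ψ' a' b' →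
          (∀ k : ℕ, 1 ≤ k → k ≤ m → φ' (a' ^ k) = φ (a ^ k)) →
          (∀ l : ℕ, 1 ≤ l → l ≤ m - 2 → ψ' (b' ^ l) = ψ (b ^ l)) →
          φ' ((a' + b') ^ m) = φ ((a + b) ^ m) := by
  intro A _ _ φ ψ a b hφ _ h
  have h₀ := OrthogonalPair.zero_right φ ψ a
  have low_moments (m : ℕ) (hm : m ≤ 2) : φ ((a + b) ^ m) = φ ((a + 0) ^ m) :=
    h₀.map_add_pow_eq_of_moments_eq h hφ hφ m (fun _ _ _ => rfl) (fun _ _ _ => by omega)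
  refine ⟨by simpa using low_moments 1 one_le_two, by simpa using low_moments 2 le_rfl, ?_⟩
  intro m _ A' _ _ φ' ψ' a' b' hφ' _ h' hμ hν
  exact h.map_add_pow_eq_of_moments_eq h' hφ hφ' m hμ hν
end

section
/- Let μ, ν be compactly supported probability measures on ℝ with Jacobi parameters J(μ) = ((α₀,α₁,α,α,...),(ω₀,ω₁,ω,ω,...)) and J(ν) = ((β, β+α, β+α, ...),(γ, γ+ω, γ+ω, ...)), where α,ω,β,γ are real numbers with ω,γ ≥ 0. Then the orthogonal convolution μ ⊢ ν has Jacobi parameters J(μ⊢ν) = ((α₀, α₁+β, α+β, α+β, ...),(ω₀, ω₁+γ, ω+γ, ω+γ, ...)). -/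
open MeasureTheory

/-- The Cauchy transform `G_μ(z) = ∫ (z - x)⁻¹ dμ(x)`. -/
noncomputable def cauchyT (μ : Measure ℝ) (z : ℂ) : ℂ := ∫ x, (z - (x : ℂ))⁻¹ ∂μ

/-- The reciprocal Cauchy transform `F_μ = 1 / G_μ`. -/
noncomputable def recipC (μ : Measure ℝ) (z : ℂ) : ℂ := (cauchyT μ z)⁻¹

/-- `W` is the Cauchy transform of the Wigner (semicircle) law with mean `a` and
variance `b`: it maps `ℂ⁺` to the open lower half-plane and satisfies the
quadratic equation `b W(z)² - (z - a) W(z) + 1 = 0`. -/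
def IsWignerTransform (a b : ℝ) (W : ℂ → ℂ) : Prop :=
  ∀ z : ℂ, 0 < z.im →
    (b : ℂ) * (W z) ^ 2 - (z - (a : ℂ)) * W z + 1 = 0 ∧ (W z).im < 0

private lemma quad_unique16 (ω : ℝ) (hω : 0 ≤ ω) (c X Y : ℂ) (hc : 0 < c.im)
    (hX : (ω:ℂ)*X^2 - c*X + 1 = 0) (hY : (ω:ℂ)*Y^2 - c*Y + 1 = 0)
    (hXim : X.im < 0) (hYim : Y.im < 0) : X = Y := by
  by_contra hne
  have h1 : (X - Y) * ((ω:ℂ)*(X+Y) - c) = 0 := by linear_combination hX - hY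
  rcases mul_eq_zero.mp h1 with h | h
  · exact hne (sub_eq_zero.mp h)
  · have h2 : (ω:ℂ)*(X+Y) = c := sub_eq_zero.mp h
    have h3 : ω*(X.im + Y.im) = c.im := by
      have := congrArg Complex.im h2
      simpa [Complex.add_im, mul_add] using this
    nlinarith [mul_nonneg hω (neg_nonneg.mpr (le_of_lt (by linarith : X.im + Y.im < (0:ℝ))))]

/-- Let `μ, ν` be compactly supported probability measures with mixed periodic
Jacobi parameters `J(μ) = ((α₀,α₁,α,α,...),(ω₀,ω₁,ω,ω,...))`, i.e.
`F_μ(z) = z - α₀ - ω₀/(z - α₁ - ω₁ W_{(α,ω)}(z))`, and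
`J(ν) = ((β,β+α,β+α,...),(γ,γ+ω,γ+ω,...))`, i.e.
`F_ν(z) = z - β - γ W_{(α+β,ω+γ)}(z)`.  Then the orthogonal convolution `μ ⊢ ν`
has Jacobi parameters `((α₀,α₁+β,α+β,α+β,...),(ω₀,ω₁+γ,ω+γ,ω+γ,...))`, i.e.
`F_{μ⊢ν}(z) = F_μ(F_ν(z)) - F_ν(z) + z
  = z - α₀ - ω₀/(z - (α₁+β) - (ω₁+γ) W_{(α+β,ω+γ)}(z))`. -/
theorem stmt16 (α₀ α₁ α ω₀ ω₁ ω β γ : ℝ)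
    (hω₀ : 0 ≤ ω₀) (hω₁ : 0 ≤ ω₁) (hω : 0 ≤ ω) (hγ : 0 ≤ γ)
    (W₁ W₂ : ℂ → ℂ)
    (hW₁ : IsWignerTransform α ω W₁)
    (hW₂ : IsWignerTransform (α + β) (ω + γ) W₂)
    (μ ν : Measure ℝ) [IsProbabilityMeasure μ] [IsProbabilityMeasure ν]
    (hμc : ∃ R : ℝ, μ (Set.Icc (-R) R) = 1)
    (hνc : ∃ R : ℝ, ν (Set.Icc (-R) R) = 1)
    (hμ : ∀ z : ℂ, 0 < z.im →
      recipC μ z = z - (α₀ : ℂ) - (ω₀ : ℂ) / (z - (α₁ : ℂ) - (ω₁ : ℂ) * W₁ z))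
    (hν : ∀ z : ℂ, 0 < z.im → recipC ν z = z - (β : ℂ) - (γ : ℂ) * W₂ z) :
    ∀ z : ℂ, 0 < z.im →
      recipC μ (recipC ν z) - recipC ν z + z
        = z - (α₀ : ℂ)
            - (ω₀ : ℂ) / (z - ((α₁ : ℂ) + (β : ℂ)) - ((ω₁ : ℂ) + (γ : ℂ)) * W₂ z) := by
  intro z hz
  obtain ⟨hq2, him2⟩ := hW₂ z hz
  set w : ℂ := z - (β:ℂ) - (γ:ℂ) * W₂ z with hw
  have hwim : 0 < w.im := by
    have h1 : w.im = z.im - γ * (W₂ z).im := by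
      simp [hw, Complex.sub_im, Complex.mul_im]
    nlinarith [mul_nonpos_of_nonneg_of_nonpos hγ (le_of_lt him2)]
  obtain ⟨hq1, him1⟩ := hW₁ w hwim
  have hkey : W₁ w = W₂ z := by
    refine quad_unique16 ω hω (w - (α:ℂ)) _ _ (by simpa using hwim) ?_ ?_ him1 him2
    · linear_combination hq1
    · push_cast at hq2
      linear_combination hq2
  have hνz := hν z hz
  rw [hνz, ← hw, hμ w hwim, hkey, hw]
  ring_nf
end

section
/- Let μ be the Wigner (semicircle) measure with mean α and variance ω. Then the s-free convolution μ ⊼ μ, defined by the fixed-point equation K_{μ⊼μ}(z) = K_μ(z - K_{μ⊼μ}(z)), has Jacobi parameters J(μ⊼μ) = ((α, 2α, 2α, ...), (ω, 2ω, 2ω, ...)); equivalently K_{μ⊼μ}(z) = ω·W_{(2α,2ω)}(z) where W_{(2α,2ω)} is the Cauchy transform of the semicircle law with mean 2α and variance 2ω. -/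
open MeasureTheory

lemma imG_neg (ρ : Measure ℝ) [IsProbabilityMeasure ρ] (z : ℂ) (hz : 0 < z.im) :
    (cauchyT ρ z).im < 0 := by
  have hne : ∀ x : ℝ, z - (x : ℂ) ≠ 0 := by
    intro x h
    have : (z - (x : ℂ)).im = z.im := by simp
    rw [h] at this; simp at this; linarith
  have hcont : Continuous fun x : ℝ => (z - (x : ℂ))⁻¹ :=
    (continuous_const.sub Complex.continuous_ofReal).inv₀ hne
  have hint : Integrable (fun x : ℝ => (z - (x : ℂ))⁻¹) ρ := by
    apply Integrable.mono' (integrable_const (z.im)⁻¹) hcont.aestronglyMeasurable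
    filter_upwards with x
    rw [norm_inv]
    rw [inv_le_inv₀ (norm_pos_iff.2 (hne x)) hz]
    calc z.im = |(z - (x:ℂ)).im| := by simp [abs_of_pos hz]
    _ ≤ ‖z - (x:ℂ)‖ := Complex.abs_im_le_norm _
  have him : (cauchyT ρ z).im = ∫ x, ((z - (x : ℂ))⁻¹).im ∂ρ := by
    rw [cauchyT]; simpa using (integral_im hint).symm
  rw [him]
  have heq : ∀ x : ℝ, ((z - (x : ℂ))⁻¹).im = -(z.im / Complex.normSq (z - x)) := by
    intro x
    rw [Complex.inv_im]
    simp [neg_div]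
  have : (0:ℝ) < ∫ x, z.im / Complex.normSq (z - x) ∂ρ := by
    rw [integral_pos_iff_support_of_nonneg]
    · have : (Function.support fun x : ℝ => z.im / Complex.normSq (z - x)) = Set.univ := by
        ext x
        simp only [Function.mem_support, Set.mem_univ, iff_true]
        have := Complex.normSq_pos.2 (hne x)
        positivity
      rw [this]; simp
    · intro x
      have := Complex.normSq_pos.2 (hne x)
      positivity
    · refine hint.im.neg.congr ?_
      filter_upwards with x
      simp only [Pi.neg_apply, RCLike.im_to_complex, heq, neg_neg]
  calc ∫ x, ((z - (x : ℂ))⁻¹).im ∂ρ = -∫ x, z.im / Complex.normSq (z - x) ∂ρ := by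
        simp only [heq]; rw [integral_neg]
  _ < 0 := by linarith

/-- Let `μ` be the Wigner (semicircle) measure with mean `α` and variance `ω`, so
that its K-transform is `K_μ(z) = α + ω W_{(α,ω)}(z)`.  If `Ksf = K_{μ⊼μ}` is the
K-transform of a probability measure (the s-free convolution `μ ⊼ μ`) satisfying
the fixed-point equation `K_{μ⊼μ}(z) = K_μ(z - K_{μ⊼μ}(z))`, then `μ ⊼ μ` has
Jacobi parameters `((α,2α,2α,...),(ω,2ω,2ω,...))`, i.e.
`K_{μ⊼μ}(z) = α + ω W_{(2α,2ω)}(z)`. -/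
theorem stmt17 (α ω : ℝ) (hω : 0 ≤ ω) (W₁ W₂ : ℂ → ℂ)
    (hW₁ : IsWignerTransform α ω W₁)
    (hW₂ : IsWignerTransform (2 * α) (2 * ω) W₂)
    (Kμ Ksf : ℂ → ℂ)
    (hKμ : ∀ z : ℂ, 0 < z.im → Kμ z = (α : ℂ) + (ω : ℂ) * W₁ z)
    (ρ : Measure ℝ) [IsProbabilityMeasure ρ]
    (hKsf : ∀ z : ℂ, 0 < z.im → Ksf z = z - recipC ρ z)
    (hfix : ∀ z : ℂ, 0 < z.im → Ksf z = Kμ (z - Ksf z)) :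
    ∀ z : ℂ, 0 < z.im → Ksf z = (α : ℂ) + (ω : ℂ) * W₂ z := by
  intro z hz
  have hG := imG_neg ρ z hz
  have hGne : cauchyT ρ z ≠ 0 := fun h => by rw [h] at hG; simp at hG
  have hF : 0 < (recipC ρ z).im := by
    rw [recipC, Complex.inv_im]
    have : 0 < -(cauchyT ρ z).im / Complex.normSq (cauchyT ρ z) :=
      div_pos (neg_pos.2 hG) (Complex.normSq_pos.2 hGne)
    simpa [neg_div] using this
  have hw : z - Ksf z = recipC ρ z := by rw [hKsf z hz]; ring
  set F := recipC ρ z with hFdef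
  have hKs : Ksf z = (α : ℂ) + (ω : ℂ) * W₁ F := by
    rw [hfix z hz, hw, hKμ F hF]
  obtain ⟨hq1, hi1⟩ := hW₁ F hF
  obtain ⟨hq2, hi2⟩ := hW₂ z hz
  set u := W₁ F with hu
  set v := W₂ z with hv
  -- F = z - α - ω u
  have hFz : F = z - (α : ℂ) - (ω : ℂ) * u := by rw [← hw, hKs]; ring
  -- quadratic for u
  have hqu : 2 * (ω : ℂ) * u ^ 2 - (z - 2 * (α : ℂ)) * u + 1 = 0 := by
    have := hq1
    rw [hFz] at this
    linear_combination this
  have hqv : 2 * (ω : ℂ) * v ^ 2 - (z - 2 * (α : ℂ)) * v + 1 = 0 := by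
    have := hq2
    push_cast at this
    linear_combination this
  rcases hω.eq_or_lt with h0 | hpos
  · rw [hKs, ← h0]; push_cast; ring
  · -- show u = v
    have key : (u - v) * (2 * (ω : ℂ) * (u + v) - (z - 2 * (α : ℂ))) = 0 := by
      linear_combination hqu - hqv
    have huv : u = v := by
      rcases mul_eq_zero.1 key with h | h
      · exact sub_eq_zero.1 h
      · exfalso
        have hprod : 2 * (ω : ℂ) * u * v = 1 := by
          have h' : 2 * (ω : ℂ) * (u + v) = z - 2 * (α : ℂ) := by
            linear_combination h
          linear_combination u * h' - hqu
        have hune : u ≠ 0 := fun h => by rw [h] at hi1; simp at hi1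
        have hveq : v = (2 * (ω : ℂ) * u)⁻¹ :=
          (inv_eq_of_mul_eq_one_right hprod).symm
        have : 0 < v.im := by
          rw [hveq, Complex.inv_im]
          have h1 : (2 * (ω : ℂ) * u).im = 2 * ω * u.im := by
            simp [Complex.mul_im, Complex.ofReal_im]
          have h2ω : (2 : ℂ) * (ω : ℂ) ≠ 0 := by
            have : ((2 * ω : ℝ) : ℂ) ≠ 0 := Complex.ofReal_ne_zero.mpr (by positivity)
            simpa using this
          have h2 : 0 < Complex.normSq (2 * (ω : ℂ) * u) :=
            Complex.normSq_pos.2 (mul_ne_zero h2ω hune)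
          rw [h1]
          have : 0 < -(2 * ω * u.im) := by nlinarith
          positivity
        linarith
    rw [hKs, huv]
end
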